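/- arXiv:1702.03745 — 9 statements merged into one kernel-verified Lean document; each statement's English description precedes it below -/
import Mathlib

section
/- Fundamental Theorem of Γ-convergence (value convergence): Let (X,d) be a metric space and let F_n : X → [-∞,+∞], n ∈ ℕ, be a sequence of functions which is equicoercive and which Γ-converges to a function F : X → [-∞,+∞]. Then F attains a minimum over X and min_X F = lim_n inf_X F_n. -/
/-!
Write `m n = inf_X Fₙ`. A recovery sequence for `x` shows `limsup m ≤ F x`. Conversely, pick
levels `uₖ ↓ liminf m`; infinitely often `m n < uₖ`, so along a subsequence `nₖ` there are points
`xₖ ∈ K` with `F_{nₖ} xₖ < uₖ`. By compactness a further subsequence converges to some `x₀`, and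
the Γ-liminf inequality, which survives passing to subsequences, gives `F x₀ ≤ liminf m`. Hence
`F x₀ ≤ liminf m ≤ limsup m ≤ F x` for all `x`.
-/

open Filter Topology Function

theorem tendsto_extend_const_cofinite {α γ X : Type*} [TopologicalSpace X] {g : α → γ}
    (hg : Injective g) {y : α → X} {x : X} (hy : Tendsto y cofinite (𝓝 x)) :
    Tendsto (extend g y fun _ => x) cofinite (𝓝 x) := by
  intro U hU
  have hfin : {a | y a ∉ U}.Finite := hy hU
  refine (hfin.image g).subset fun c hc => ?_
  by_cases hrange : ∃ a, g a = c
  · obtain ⟨a, rfl⟩ := hrange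
    exact ⟨a, by simpa [hg.extend_apply] using hc, rfl⟩
  · exact absurd (mem_of_mem_nhds hU) (by simpa [extend_apply' _ _ _ hrange] using hc)

section GammaConvergence

variable {X β : Type*} {F : X → β} {Fn : ℕ → X → β}

theorem le_liminf_comp_of_gamma_liminf [TopologicalSpace X] [CompleteLattice β]
    (hliminf : ∀ x : X, ∀ xs : ℕ → X, Tendsto xs atTop (𝓝 x) →
      F x ≤ liminf (fun n => Fn n (xs n)) atTop)
    {g : ℕ → ℕ} (hg : StrictMono g) {y : ℕ → X} {x : X} (hy : Tendsto y atTop (𝓝 x)) :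
    F x ≤ liminf (fun j => Fn (g j) (y j)) atTop := by
  set z : ℕ → X := extend g y fun _ => x
  have hz : Tendsto z atTop (𝓝 x) := by
    rw [← Nat.cofinite_eq_atTop] at hy ⊢
    exact tendsto_extend_const_cofinite hg.injective hy
  calc F x ≤ liminf (fun n => Fn n (z n)) atTop := hliminf x z hz
    _ ≤ liminf (fun j => Fn (g j) (z (g j))) atTop :=
      hg.tendsto_atTop.liminf_le_liminf_comp (u := fun n => Fn n (z n))
    _ = liminf (fun j => Fn (g j) (y j)) atTop := by
      simp only [z, hg.injective.extend_apply]

variable [CompleteLinearOrder β] [TopologicalSpace β] [OrderTopology β]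

theorem limsup_iInf_le_of_tendsto {xs : ℕ → X} {a : β}
    (h : Tendsto (fun n => Fn n (xs n)) atTop (𝓝 a)) :
    limsup (fun n => ⨅ x, Fn n x) atTop ≤ a :=
  calc limsup (fun n => ⨅ x, Fn n x) atTop ≤ limsup (fun n => Fn n (xs n)) atTop :=
        limsup_le_limsup (Eventually.of_forall fun n => iInf_le _ _)
    _ = a := h.limsup_eq

theorem exists_le_liminf_iInf_of_isCompact [TopologicalSpace X] [FirstCountableTopology X]
    [Nonempty X]
    [DenselyOrdered β] [FirstCountableTopology β]
    (hliminf : ∀ x : X, ∀ xs : ℕ → X, Tendsto xs atTop (𝓝 x) →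
      F x ≤ liminf (fun n => Fn n (xs n)) atTop)
    {K : Set X} (hK : IsCompact K) (hKinf : ∀ n, ⨅ x ∈ K, Fn n x = ⨅ x, Fn n x) :
    ∃ x₀, F x₀ ≤ liminf (fun n => ⨅ x, Fn n x) atTop := by
  set L := liminf (fun n => ⨅ x, Fn n x) atTop
  rcases (le_top : L ≤ ⊤).eq_or_lt with hL | hL
  · exact ⟨Classical.arbitrary X, hL ▸ le_top⟩
  obtain ⟨u, -, huL, hu⟩ := exists_seq_strictAnti_tendsto' hL
  have hfreq : ∀ k, ∃ᶠ n in atTop, ∃ x ∈ K, Fn n x < u k := fun k =>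
    (frequently_lt_of_liminf_lt (h := (huL k).1)).mono fun n hn => by
      simpa only [← hKinf n, iInf_lt_iff, exists_prop] using hn
  obtain ⟨φ, hφ, hnear⟩ := extraction_forall_of_frequently hfreq
  choose x hxK hxu using hnear
  obtain ⟨x₀, -, ψ, hψ, hx₀⟩ := hK.tendsto_subseq hxK
  refine ⟨x₀, ?_⟩
  calc F x₀ ≤ liminf (fun j => Fn (φ (ψ j)) (x (ψ j))) atTop :=
        le_liminf_comp_of_gamma_liminf hliminf (hφ.comp hψ) hx₀
    _ ≤ liminf (fun j => u (ψ j)) atTop :=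
        liminf_le_liminf (Eventually.of_forall fun j => (hxu (ψ j)).le)
    _ = L := (hu.comp hψ.tendsto_atTop).liminf_eq

end GammaConvergence

/-- Fundamental Theorem of Γ-convergence (value convergence):
if `Fn` is an equicoercive sequence of functionals on a metric space `X`
which Γ-converges to `F`, then `F` attains its minimum over `X` and
`min_X F = lim_n inf_X Fn`. -/
theorem gamma_convergence_fundamental_value
    {X : Type*} [MetricSpace X] [Nonempty X]
    (F : X → EReal) (Fn : ℕ → X → EReal)
    (hliminf : ∀ x : X, ∀ xs : ℕ → X, Tendsto xs atTop (𝓝 x) →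
      F x ≤ liminf (fun n => Fn n (xs n)) atTop)
    (hrecov : ∀ x : X, ∃ xs : ℕ → X, Tendsto xs atTop (𝓝 x) ∧
      Tendsto (fun n => Fn n (xs n)) atTop (𝓝 (F x)))
    (hequi : ∃ K : Set X, IsCompact K ∧ ∀ n : ℕ, ⨅ x ∈ K, Fn n x = ⨅ x : X, Fn n x) :
    ∃ xmin : X, (∀ x : X, F xmin ≤ F x) ∧
      Tendsto (fun n => ⨅ x : X, Fn n x) atTop (𝓝 (F xmin)) := by
  obtain ⟨K, hK, hKinf⟩ := hequi
  obtain ⟨x₀, hx₀⟩ := exists_le_liminf_iInf_of_isCompact hliminf hK hKinf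
  have hlimsup : ∀ x, limsup (fun n => ⨅ x, Fn n x) atTop ≤ F x := fun x =>
    let ⟨_, _, hrec⟩ := hrecov x
    limsup_iInf_le_of_tendsto hrec
  have hliminf_le_limsup : liminf (fun n => ⨅ x, Fn n x) atTop ≤
      limsup (fun n => ⨅ x, Fn n x) atTop := liminf_le_limsup
  refine ⟨x₀, fun x => hx₀.trans (hliminf_le_limsup.trans (hlimsup x)), ?_⟩
  exact tendsto_of_liminf_eq_limsup
    (le_antisymm (hliminf_le_limsup.trans (hlimsup x₀)) hx₀)
    (le_antisymm (hlimsup x₀) (hx₀.trans hliminf_le_limsup))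
end

section
/- Fundamental Theorem of Γ-convergence (convergence of minimizing sequences): Let (X,d) be a metric space and let F_n : X → [-∞,+∞], n ∈ ℕ, be a sequence of functions which is equicoercive and which Γ-converges to a function F : X → [-∞,+∞]. If {x_n} is a sequence of points of X converging to a point x ∈ X and satisfying lim_n F_n(x_n) = lim_n inf_X F_n, then x is a minimum point of F over X. -/
open Filter Topology

/-- Fundamental Theorem of Γ-convergence (convergence of minimizing sequences):
if `Fn` is an equicoercive sequence of functionals on a metric space `X`
which Γ-converges to `F`, and `xs` is a sequence converging to `x` with
`lim_n Fn n (xs n) = lim_n inf_X Fn`, then `x` is a minimum point of `F`. -/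
theorem gamma_convergence_fundamental_minimizers
    {X : Type*} [MetricSpace X]
    (F : X → EReal) (Fn : ℕ → X → EReal)
    (hliminf : ∀ x : X, ∀ xs : ℕ → X, Tendsto xs atTop (𝓝 x) →
      F x ≤ liminf (fun n => Fn n (xs n)) atTop)
    (hrecov : ∀ x : X, ∃ xs : ℕ → X, Tendsto xs atTop (𝓝 x) ∧
      Tendsto (fun n => Fn n (xs n)) atTop (𝓝 (F x)))
    (hequi : ∃ K : Set X, IsCompact K ∧ ∀ n : ℕ, ⨅ x ∈ K, Fn n x = ⨅ x : X, Fn n x)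
    (x : X) (xs : ℕ → X) (hxs : Tendsto xs atTop (𝓝 x))
    (L : EReal)
    (hlim1 : Tendsto (fun n => Fn n (xs n)) atTop (𝓝 L))
    (hlim2 : Tendsto (fun n => ⨅ y : X, Fn n y) atTop (𝓝 L)) :
    ∀ y : X, F x ≤ F y := by
  intro y
  have h1 : F x ≤ L := by
    have := hliminf x xs hxs
    rwa [hlim1.liminf_eq] at this
  obtain ⟨ys, hys, hlimy⟩ := hrecov y
  have h2 : L ≤ F y :=
    le_of_tendsto_of_tendsto hlim2 hlimy
      (Eventually.of_forall fun n => iInf_le _ (ys n))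
  exact h1.trans h2
end

section
/- Convergence of minimum values for the regularised problems: Under the regularisation setting, min_X F_0 = lim_{ε→0+} min_X F_ε, and this common value is finite. -/
/-!
A minimiser `xm` of `F0` exists because `R` is lower semicontinuous with compact sublevel sets
and the fibre `Λ ⁻¹' {Λ x0}` is closed. Testing `F ε` at `xm`, where `dist (Λ xm) (Λε ε) ≤ ε`,
gives `⨅ F ε ≤ ε ^ (α - γ) + F0 xm → F0 xm` because `γ < α`. Conversely, for `c < F0 xm` the compact
sublevel set `{a R ≤ c}` misses the fibre, so on it `Λ` stays at a distance `η > 0` from `Λ x0`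
and the penalty is at least `(η / 2) ^ α / ε ^ γ → ∞`; off it, `a R > c` already.
-/

open Filter Topology Set

section Coercive

variable {X : Type*} [TopologicalSpace X] {R : X → EReal}

lemma isCompact_sublevel_of_forall_pos (hR : LowerSemicontinuous R)
    (hcomp : ∀ C : ℝ, 0 < C → IsCompact {x | R x ≤ C}) (t : ℝ) :
    IsCompact {x | R x ≤ t} :=
  (hcomp _ (lt_max_of_lt_left one_pos)).of_isClosed_subset (hR.isClosed_preimage t)
    fun _ hx => hx.trans (EReal.coe_le_coe_iff.2 (le_max_right 1 t))

lemma LowerSemicontinuous.exists_isMinOn_of_isClosed (hR : LowerSemicontinuous R)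
    (hcomp : ∀ C : ℝ, 0 < C → IsCompact {x | R x ≤ C}) {S : Set X} (hS : IsClosed S)
    (hne : S.Nonempty) : ∃ x ∈ S, IsMinOn R S x := by
  by_cases hfin : ∃ x ∈ S, R x ≠ ⊤
  swap
  · push Not at hfin
    obtain ⟨x, hx⟩ := hne
    exact ⟨x, hx, fun y hy => by simp [hfin y hy]⟩
  obtain ⟨x0, hx0, hR0⟩ := hfin
  set t := (R x0).toReal
  have hK : IsCompact (S ∩ {x | R x ≤ t}) :=
    (isCompact_sublevel_of_forall_pos hR hcomp t).inter_left hS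
  have hx0K : x0 ∈ S ∩ {x | R x ≤ t} := ⟨hx0, EReal.le_coe_toReal hR0⟩
  obtain ⟨x, hxK, hmin⟩ := LowerSemicontinuousOn.exists_isMinOn ⟨x0, hx0K⟩ hK
    (hR.lowerSemicontinuousOn _)
  refine ⟨x, hxK.1, fun y hy => ?_⟩
  by_cases hyt : R y ≤ t
  · exact hmin ⟨hy, hyt⟩
  · exact hxK.2.trans (le_of_not_ge hyt)

lemma LowerSemicontinuous.exists_forall_coe_le (hR : LowerSemicontinuous R)
    (hcomp : ∀ C : ℝ, 0 < C → IsCompact {x | R x ≤ C}) (hbot : ∀ x, R x ≠ ⊥) :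
    ∃ ρ : ℝ, ∀ x, (ρ : EReal) ≤ R x := by
  rcases isEmpty_or_nonempty X with hX | ⟨⟨x0⟩⟩
  · exact ⟨0, fun x => isEmptyElim x⟩
  obtain ⟨x1, -, hx1⟩ := hR.exists_isMinOn_of_isClosed hcomp isClosed_univ ⟨x0, trivial⟩
  exact ⟨(R x1).toReal, fun x => (EReal.coe_toReal_le (hbot x1)).trans (hx1 (mem_univ x))⟩

end Coercive

lemma tendsto_div_rpow_nhdsGT_zero_atTop {κ γ : ℝ} (hκ : 0 < κ) (hγ : 0 < γ) :
    Tendsto (fun ε : ℝ => κ / ε ^ γ) (𝓝[>] 0) atTop := by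
  refine ((tendsto_rpow_neg_nhdsGT_zero (neg_lt_zero.2 hγ)).const_mul_atTop hκ).congr' ?_
  filter_upwards [self_mem_nhdsWithin] with ε (hε : 0 < ε)
  rw [Real.rpow_neg hε.le, div_eq_mul_inv]

lemma tendsto_coe_rpow_add_nhdsGT_zero {p : ℝ} (hp : 0 < p) (z : EReal) :
    Tendsto (fun ε : ℝ => ((ε ^ p : ℝ) : EReal) + z) (𝓝[>] 0) (𝓝 z) := by
  have hpow : Tendsto (fun ε : ℝ => ε ^ p) (𝓝[>] 0) (𝓝 0) := by
    simpa [Real.zero_rpow hp.ne'] using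
      (Real.continuousAt_rpow_const 0 p (Or.inr hp.le)).tendsto.mono_left nhdsWithin_le_nhds
  simpa [Function.comp_def] using (EReal.continuousAt_add (p := (0, z)) (Or.inl EReal.zero_ne_top)
    (Or.inl EReal.zero_ne_bot)).tendsto.comp
      ((EReal.tendsto_coe.2 hpow).prodMk_nhds tendsto_const_nhds)

lemma tendsto_iInf_of_forall_lt {α ι β : Type*} [CompleteLinearOrder β] [TopologicalSpace β]
    [OrderTopology β] [DenselyOrdered β] {f : α → ι → β} {l : Filter α} {m : β} {u : α → β}
    (hu : Tendsto u l (𝓝 m)) (hup : ∀ᶠ a in l, ∃ i, f a i ≤ u a)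
    (hlow : ∀ c < m, ∀ᶠ a in l, ∀ i, c ≤ f a i) :
    Tendsto (fun a => ⨅ i, f a i) l (𝓝 m) := by
  refine tendsto_order.2 ⟨fun b hb => ?_, fun b hb => ?_⟩
  · obtain ⟨c, hbc, hcm⟩ := exists_between hb
    exact (hlow c hcm).mono fun a h => hbc.trans_le (le_iInf h)
  · filter_upwards [hu.eventually (gt_mem_nhds hb), hup] with a hlt ⟨i, hi⟩
    exact (iInf_le _ i).trans_lt (hi.trans_lt hlt)

section Tikhonov

variable {X Y : Type*} [MetricSpace Y] {Λ : X → Y} {R : X → EReal}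
  {F : ℝ → X → EReal} {Λε : ℝ → Y} {y0 : Y} {α γ a : ℝ}

lemma eventually_forall_le_of_lt_on_fiber [TopologicalSpace X] (hΛ : Continuous Λ)
    (hR : LowerSemicontinuous R) (hcomp : ∀ C : ℝ, 0 < C → IsCompact {x | R x ≤ C})
    (hbot : ∀ x, R x ≠ ⊥)
    (hα : 0 ≤ α) (hγ : 0 < γ) (ha : 0 < a)
    (hΛε : ∀ᶠ ε in 𝓝[>] 0, dist (Λε ε) y0 ≤ ε)
    (hF : ∀ᶠ ε in 𝓝[>] 0, ∀ x,
      F ε x = ((dist (Λ x) (Λε ε) ^ α / ε ^ γ : ℝ) : EReal) + (a : EReal) * R x)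
    {c : ℝ} (hc : ∀ x, Λ x = y0 → (c : EReal) < a * R x) :
    ∀ᶠ ε in 𝓝[>] 0, ∀ x, (c : EReal) ≤ F ε x := by
  obtain ⟨ρ, hρ⟩ := hR.exists_forall_coe_le hcomp hbot
  set K := {x | R x ≤ ((c / a : ℝ) : EReal)}
  have hmemK : ∀ x, x ∈ K ↔ (a : EReal) * R x ≤ c := fun x => by
    rw [mem_ofPred_eq, EReal.coe_div, EReal.le_div_iff_mul_le (by exact_mod_cast ha)
      (EReal.coe_ne_top a), mul_comm]
  obtain ⟨η, hη, hηK⟩ : ∃ η > 0, ∀ x ∈ K, η ≤ dist (Λ x) y0 := by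
    have hy0 : y0 ∉ Λ '' K := by
      rintro ⟨x, hx, rfl⟩
      exact ((hmemK x).1 hx).not_gt (hc x rfl)
    obtain ⟨η, hη, hball⟩ := Metric.isOpen_iff.1
      ((isCompact_sublevel_of_forall_pos hR hcomp _).image hΛ).isClosed.isOpen_compl y0 hy0
    exact ⟨η, hη, fun x hx =>
      not_lt.1 fun h => hball (Metric.mem_ball.2 h) (mem_image_of_mem Λ hx)⟩
  have hblow : ∀ᶠ ε in 𝓝[>] 0, c - a * ρ ≤ (η / 2) ^ α / ε ^ γ :=
    (tendsto_div_rpow_nhdsGT_zero_atTop (by positivity) hγ).eventually_ge_atTop _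
  filter_upwards [hF, hΛε, hblow, Ioo_mem_nhdsGT (half_pos hη)] with ε hFε hdist hbig hε x
  rw [hFε]
  by_cases hx : x ∈ K
  · have hfar : η / 2 ≤ dist (Λ x) (Λε ε) := by
      linarith [hηK x hx, dist_triangle (Λ x) (Λε ε) y0, hε.2]
    have hreal : c ≤ dist (Λ x) (Λε ε) ^ α / ε ^ γ + a * ρ := by
      have := div_le_div_of_nonneg_right (Real.rpow_le_rpow (by positivity) hfar hα)
        (Real.rpow_nonneg hε.1.le γ)
      linarith
    calc (c : EReal) ≤ ((dist (Λ x) (Λε ε) ^ α / ε ^ γ + a * ρ : ℝ) : EReal) := by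
          exact_mod_cast hreal
      _ = ((dist (Λ x) (Λε ε) ^ α / ε ^ γ : ℝ) : EReal) + (a : EReal) * ρ := by
          rw [EReal.coe_add, EReal.coe_mul]
      _ ≤ _ := add_le_add_right (mul_le_mul_of_nonneg_left (hρ x) (EReal.coe_nonneg.2 ha.le)) _
  · have hpen : (0 : EReal) ≤ ((dist (Λ x) (Λε ε) ^ α / ε ^ γ : ℝ) : EReal) :=
      EReal.coe_nonneg.2 (div_nonneg (Real.rpow_nonneg dist_nonneg _)
        (Real.rpow_nonneg hε.1.le _))
    exact (not_le.1 ((hmemK x).not.1 hx)).le.trans (le_add_of_nonneg_left hpen)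

lemma eventually_le_of_mem_fiber (hα : 0 ≤ α)
    (hΛε : ∀ᶠ ε in 𝓝[>] 0, dist (Λε ε) y0 ≤ ε)
    (hF : ∀ᶠ ε in 𝓝[>] 0, ∀ x,
      F ε x = ((dist (Λ x) (Λε ε) ^ α / ε ^ γ : ℝ) : EReal) + (a : EReal) * R x)
    {x : X} (hx : Λ x = y0) :
    ∀ᶠ ε in 𝓝[>] 0, F ε x ≤ ((ε ^ (α - γ) : ℝ) : EReal) + a * R x := by
  filter_upwards [hF, hΛε, self_mem_nhdsWithin] with ε hFε hdist (hε : 0 < ε)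
  rw [hFε, hx, dist_comm]
  gcongr
  rw [Real.rpow_sub hε]
  gcongr

end Tikhonov

theorem regularised_min_values_converge_general
    {X Y : Type*} [MetricSpace X] [MetricSpace Y]
    (Λ : X → Y) (hΛ : Continuous Λ) (x0 : X)
    (R : X → EReal)
    (hRbot : ∀ x : X, R x ≠ ⊥)
    (hRlsc : LowerSemicontinuous R)
    (hRcompact : ∀ C : ℝ, 0 < C → IsCompact {x : X | R x ≤ (C : EReal)})
    (α γ a ε0 : ℝ)
    (hα : 0 < α) (hγ : 0 < γ) (hγα : γ < α) (ha : 0 < a) (hε0 : 0 < ε0)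
    (Λε : ℝ → Y) (hΛε : ∀ ε : ℝ, 0 < ε → ε ≤ ε0 → dist (Λε ε) (Λ x0) ≤ ε)
    (hR0 : R x0 ≠ ⊤)
    (F : ℝ → X → EReal)
    (hF : ∀ ε : ℝ, 0 < ε → ε ≤ ε0 → ∀ x : X,
      F ε x = ((dist (Λ x) (Λε ε) ^ α / ε ^ γ : ℝ) : EReal) + (a : EReal) * R x)
    (F0 : X → EReal)
    (hF0eq : ∀ x : X, Λ x = Λ x0 → F0 x = (a : EReal) * R x)
    (hF0top : ∀ x : X, Λ x ≠ Λ x0 → F0 x = ⊤) :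
    ∃ xm : X, (∀ x : X, F0 xm ≤ F0 x) ∧ F0 xm ≠ ⊤ ∧ F0 xm ≠ ⊥ ∧
      Tendsto (fun ε : ℝ => ⨅ x : X, F ε x) (𝓝[>] (0 : ℝ)) (𝓝 (F0 xm)) := by
  have ha' : (0 : EReal) ≤ a := EReal.coe_nonneg.2 ha.le
  obtain ⟨xm, hxmS, hxm⟩ := hRlsc.exists_isMinOn_of_isClosed hRcompact
    (isClosed_singleton.preimage hΛ) ⟨x0, rfl⟩
  have hxm_le : ∀ x, Λ x = Λ x0 → (a : EReal) * R xm ≤ a * R x := fun x hx =>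
    mul_le_mul_of_nonneg_left (hxm hx) ha'
  have hxm_ne_top : R xm ≠ ⊤ := ne_top_of_le_ne_top hR0 (hxm rfl)
  have hsmall : ∀ᶠ ε in 𝓝[>] (0 : ℝ), ε ∈ Ioc 0 ε0 := Ioc_mem_nhdsGT hε0
  have hΛε' := hsmall.mono fun ε hε => hΛε ε hε.1 hε.2
  have hF' := hsmall.mono fun ε hε => hF ε hε.1 hε.2
  refine ⟨xm, ?_⟩
  rw [hF0eq xm hxmS]
  refine ⟨fun x => ?_, ?_, ?_, ?_⟩
  · by_cases hx : Λ x = Λ x0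
    · rw [hF0eq x hx]; exact hxm_le x hx
    · rw [hF0top x hx]; exact le_top
  · exact (EReal.mul_ne_top _ _).2 ⟨Or.inl (EReal.coe_ne_bot a), Or.inl ha',
      Or.inl (EReal.coe_ne_top a), Or.inr hxm_ne_top⟩
  · exact (EReal.mul_ne_bot _ _).2 ⟨Or.inl (EReal.coe_ne_bot a), Or.inr (hRbot xm),
      Or.inl (EReal.coe_ne_top a), Or.inl ha'⟩
  refine tendsto_iInf_of_forall_lt (tendsto_coe_rpow_add_nhdsGT_zero (sub_pos.2 hγα) _)
    ((eventually_le_of_mem_fiber hα.le hΛε' hF' hxmS).mono fun ε h => ⟨xm, h⟩) fun c hc => ?_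
  obtain ⟨c', hcc', hc'⟩ := EReal.exists_between_coe_real hc
  exact (eventually_forall_le_of_lt_on_fiber hΛ hRlsc hRcompact hRbot hα.le hγ ha hΛε' hF'
    fun x hx => hc'.trans_le (hxm_le x hx)).mono fun ε h x => hcc'.le.trans (h x)

/-- Convergence of minimum values for the regularised problems:
in the abstract regularisation setting, `min_X F0 = lim_{ε→0⁺} min_X F_ε`,
and this common value is finite. -/
theorem regularised_min_values_converge
    {X Y : Type*} [MetricSpace X] [MetricSpace Y]
    (Λ : X → Y) (hΛ : Continuous Λ) (x0 : X)
    (R : X → EReal)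
    (hRbot : ∀ x : X, R x ≠ ⊥)
    (hRnetop : ∃ x : X, R x ≠ ⊤)
    (hRlsc : LowerSemicontinuous R)
    (hRcompact : ∀ C : ℝ, 0 < C → IsCompact {x : X | R x ≤ (C : EReal)})
    (α γ a ε0 : ℝ)
    (hα : 0 < α) (hγ : 0 < γ) (hγα : γ < α) (ha : 0 < a) (hε0 : 0 < ε0)
    (Λε : ℝ → Y) (hΛε : ∀ ε : ℝ, 0 < ε → ε ≤ ε0 → dist (Λε ε) (Λ x0) ≤ ε)
    (hR0 : R x0 ≠ ⊤)
    (F : ℝ → X → EReal)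
    (hF : ∀ ε : ℝ, 0 < ε → ε ≤ ε0 → ∀ x : X,
      F ε x = ((dist (Λ x) (Λε ε) ^ α / ε ^ γ : ℝ) : EReal) + (a : EReal) * R x)
    (F0 : X → EReal)
    (hF0eq : ∀ x : X, Λ x = Λ x0 → F0 x = (a : EReal) * R x)
    (hF0top : ∀ x : X, Λ x ≠ Λ x0 → F0 x = ⊤) :
    ∃ xm : X, (∀ x : X, F0 xm ≤ F0 x) ∧ F0 xm ≠ ⊤ ∧ F0 xm ≠ ⊥ ∧
      Tendsto (fun ε : ℝ => ⨅ x : X, F ε x) (𝓝[>] (0 : ℝ)) (𝓝 (F0 xm)) :=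
  regularised_min_values_converge_general Λ hΛ x0 R hRbot hRlsc hRcompact α γ a ε0 hα hγ hγα ha hε0
    Λε hΛε hR0 F hF F0 hF0eq hF0top
end

section
/- Subsequential convergence of quasi-minimising families of regularised solutions: Under the regularisation setting, let {x̃_ε}_{0<ε≤ε0} ⊆ X satisfy lim_{ε→0+} F_ε(x̃_ε) = lim_{ε→0+} min_X F_ε (for instance, x̃_ε may be chosen as a minimiser of F_ε). Then for every sequence {ε_n} of positive numbers with ε_n → 0, there is a subsequence along which x̃_{ε_n} converges in X to a point x̃ ∈ X which is a minimiser of F_0; in particular Λ(x̃) = Λ(x0) in Y and R(x̃) = min{ R(x) : x ∈ X, Λ(x) = Λ(x0) }. -/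
/-!
For an admissible `x` (i.e. `Λ x = Λ x0`) the fidelity term of `F ε x` is at most `ε ^ (α - γ)`,
so `m ≤ a * R x`; in particular `m < ⊤`. Conversely, once `F ε (xt ε) < c`, a lower bound `b` of
`R` yields both `R (xt ε) ≤ c / a`, which puts `xt ε` in a compact sublevel set of `R`, and
`dist (Λ (xt ε)) (Λε ε) ^ α ≤ (c - a * b) * ε ^ γ`, which forces `Λ (xt ε) → Λ x0` since `γ > 0`.
A subsequential limit `x̃` is therefore admissible and, by lower semicontinuity,
`a * R x̃ ≤ m ≤ a * R x` for every admissible `x`.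
-/

open Filter Topology Set

namespace EReal

lemma coe_mul_ne_top {a : ℝ} (ha : 0 ≤ a) {u : EReal} (hu : u ≠ ⊤) : (a : EReal) * u ≠ ⊤ :=
  (mul_ne_top _ _).2
    ⟨.inl (coe_ne_bot a), .inl (EReal.coe_nonneg.2 ha), .inl (coe_ne_top a), .inr hu⟩

lemma coe_mul_ne_bot {a : ℝ} (ha : 0 ≤ a) {u : EReal} (hu : u ≠ ⊥) : (a : EReal) * u ≠ ⊥ :=
  (mul_ne_bot _ _).2
    ⟨.inl (coe_ne_bot a), .inr hu, .inl (coe_ne_top a), .inl (EReal.coe_nonneg.2 ha)⟩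

lemma coe_mul_le_coe_mul_iff {a : ℝ} (ha : 0 < a) {u v : EReal} :
    (a : EReal) * u ≤ a * v ↔ u ≤ v := by
  induction u <;> induction v <;>
    simp [coe_mul_top_of_pos ha, coe_mul_bot_of_pos ha, ← coe_mul, ha]

lemma continuous_coe_mul (a : ℝ) : Continuous fun u : EReal => (a : EReal) * u :=
  continuous_iff_continuousAt.2 fun _ =>
    EReal.Tendsto.const_mul tendsto_id (.inl (coe_ne_bot a)) (.inl (coe_ne_top a))

lemma exists_coe_of_coe_add_coe_mul_le {D a b c : ℝ} {u : EReal} (ha : 0 < a)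
    (hb : (b : EReal) ≤ u) (h : (D : EReal) + a * u ≤ c) : ∃ r : ℝ, u = r ∧ D + a * r ≤ c := by
  induction u with
  | bot => simp at hb
  | top => simp [coe_mul_top_of_pos ha] at h
  | coe r => exact ⟨r, rfl, by exact_mod_cast h⟩

lemma le_of_tendsto_of_eventually_le_coe_add {ι : Type*} {l : Filter ι} [l.NeBot]
    {f : ι → EReal} {g : ι → ℝ} {m v : EReal} (hf : Tendsto f l (𝓝 m))
    (hg : Tendsto g l (𝓝 0)) (hv : v ≠ ⊥) (h : ∀ᶠ i in l, f i ≤ g i + v) : m ≤ v := by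
  have hgv : Tendsto (fun i => (g i : EReal) + v) l (𝓝 ((0 : ℝ) + v)) :=
    (continuousAt_add (.inr hv) (.inl (coe_ne_bot 0))).tendsto.comp
      ((continuous_coe_real_ereal.tendsto 0 |>.comp hg).prodMk_nhds tendsto_const_nhds)
  simpa using le_of_tendsto_of_tendsto hf hgv h

end EReal

theorem LowerSemicontinuous.le_of_tendsto {α β ι : Type*} [TopologicalSpace α] [LinearOrder β]
    [TopologicalSpace β] [OrderTopology β] [DenselyOrdered β] {f : α → β}
    (hf : LowerSemicontinuous f) {l : Filter ι} [l.NeBot] {u : ι → α} {x : α}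
    (hu : Tendsto u l (𝓝 x)) {g : ι → β} {m : β} (hg : Tendsto g l (𝓝 m))
    (hfg : ∀ᶠ i in l, f (u i) ≤ g i) : f x ≤ m := by
  by_contra! hmx
  obtain ⟨c, hmc, hcx⟩ := exists_between hmx
  obtain ⟨i, hci, hgi, hfgi⟩ :=
    ((hu.eventually (hf x c hcx)).and ((hg.eventually (gt_mem_nhds hmc)).and hfg)).exists
  exact lt_irrefl c (hci.trans (hfgi.trans_lt hgi))

theorem LowerSemicontinuous.exists_coe_le_of_isCompact_sublevel {X : Type*}
    [TopologicalSpace X] {R : X → EReal} (hR : LowerSemicontinuous R) (hbot : ∀ x, R x ≠ ⊥)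
    {c : ℝ} (hc : IsCompact {x | R x ≤ c}) : ∃ b : ℝ, ∀ x, (b : EReal) ≤ R x := by
  rcases {x | R x ≤ c}.eq_empty_or_nonempty with hempty | hne
  · exact ⟨c, fun x => (not_le.1 fun hx => hempty.subset hx).le⟩
  obtain ⟨x₁, hx₁, hmin⟩ := (hR.lowerSemicontinuousOn _).exists_isMinOn hne hc
  obtain ⟨b, hb⟩ : ∃ b : ℝ, R x₁ = b :=
    ⟨_, (EReal.coe_toReal (hx₁.trans_lt (EReal.coe_lt_top c)).ne (hbot x₁)).symm⟩
  refine ⟨b, fun x => hb ▸ ?_⟩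
  by_cases hx : R x ≤ c
  · exact hmin hx
  · exact (le_of_not_ge hx).trans' hx₁

namespace Real

lemma rpow_div_rpow_le_rpow_sub {d ε α γ : ℝ} (hd : 0 ≤ d) (hdε : d ≤ ε) (hε : 0 < ε)
    (hα : 0 ≤ α) : d ^ α / ε ^ γ ≤ ε ^ (α - γ) := by
  rw [rpow_sub hε, div_le_div_iff_of_pos_right (rpow_pos_of_pos hε γ)]
  exact rpow_le_rpow hd hdε hα

lemma le_rpow_inv_of_rpow_div_rpow_le {d ε α γ M : ℝ} (hd : 0 ≤ d) (hε : 0 < ε) (hα : 0 < α)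
    (h : d ^ α / ε ^ γ ≤ M) : d ≤ (M * ε ^ γ) ^ α⁻¹ := by
  rw [div_le_iff₀ (rpow_pos_of_pos hε γ)] at h
  calc d = (d ^ α) ^ α⁻¹ := (rpow_rpow_inv hd hα.ne').symm
    _ ≤ (M * ε ^ γ) ^ α⁻¹ := rpow_le_rpow (rpow_nonneg hd α) h (inv_nonneg.2 hα.le)

end Real

theorem tendsto_of_eventually_rpow_div_rpow_le {Y : Type*} [PseudoMetricSpace Y] {α γ M : ℝ}
    (hα : 0 < α) (hγ : 0 < γ) {y z : ℝ → Y} {y₀ : Y}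
    (hz : ∀ᶠ ε in 𝓝[>] 0, dist (z ε) y₀ ≤ ε)
    (h : ∀ᶠ ε in 𝓝[>] 0, dist (y ε) (z ε) ^ α / ε ^ γ ≤ M) : Tendsto y (𝓝[>] 0) (𝓝 y₀) := by
  have hbound : ∀ᶠ ε in 𝓝[>] 0, dist (y ε) y₀ ≤ (M * ε ^ γ) ^ α⁻¹ + ε := by
    filter_upwards [hz, h, self_mem_nhdsWithin] with ε hzε hε (hε₀ : 0 < ε)
    calc dist (y ε) y₀ ≤ dist (y ε) (z ε) + dist (z ε) y₀ := dist_triangle _ _ _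
      _ ≤ (M * ε ^ γ) ^ α⁻¹ + ε :=
        add_le_add (Real.le_rpow_inv_of_rpow_div_rpow_le dist_nonneg hε₀ hα hε) hzε
  have hcont : Continuous fun ε : ℝ => (M * ε ^ γ) ^ α⁻¹ + ε :=
    ((Real.continuous_rpow_const (inv_nonneg.2 hα.le)).comp
      ((Real.continuous_rpow_const hγ.le).const_mul M)).add continuous_id
  have hlim : Tendsto (fun ε : ℝ => (M * ε ^ γ) ^ α⁻¹ + ε) (𝓝[>] 0) (𝓝 0) := by
    simpa [Real.zero_rpow hγ.ne', Real.zero_rpow (inv_ne_zero hα.ne')] using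
      (hcont.tendsto 0).mono_left nhdsWithin_le_nhds
  exact tendsto_iff_dist_tendsto_zero.2
    (squeeze_zero' (.of_forall fun _ => dist_nonneg) hbound hlim)

section Regularisation

variable {X Y : Type*} [PseudoMetricSpace Y] {Λ : X → Y} {R : X → EReal}
  {F : ℝ → X → EReal} {Λε : ℝ → Y} {α γ a : ℝ}

theorem eventually_coe_mul_le
    (hF : ∀ᶠ ε in 𝓝[>] 0, ∀ x, F ε x = ((dist (Λ x) (Λε ε) ^ α / ε ^ γ : ℝ) : EReal) + a * R x) :
    ∀ᶠ ε in 𝓝[>] 0, ∀ x, (a : EReal) * R x ≤ F ε x := by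
  filter_upwards [hF, self_mem_nhdsWithin] with ε hFε (hε : 0 < ε) x
  rw [hFε]
  exact le_add_of_nonneg_left (EReal.coe_nonneg.2 (by positivity))

theorem le_coe_mul_of_tendsto_iInf (hα : 0 < α) (hγα : γ < α) (ha : 0 ≤ a)
    (hF : ∀ᶠ ε in 𝓝[>] 0, ∀ x, F ε x = ((dist (Λ x) (Λε ε) ^ α / ε ^ γ : ℝ) : EReal) + a * R x)
    {m : EReal} (hmin : Tendsto (fun ε => ⨅ x, F ε x) (𝓝[>] 0) (𝓝 m)) {x : X}
    (hx : ∀ᶠ ε in 𝓝[>] 0, dist (Λ x) (Λε ε) ≤ ε) (hRx : R x ≠ ⊥) : m ≤ a * R x := by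
  have hlim : Tendsto (fun ε : ℝ => ε ^ (α - γ)) (𝓝[>] 0) (𝓝 0) := by
    simpa [Real.zero_rpow (sub_pos.2 hγα).ne'] using
      ((Real.continuous_rpow_const (sub_pos.2 hγα).le).tendsto 0).mono_left nhdsWithin_le_nhds
  refine EReal.le_of_tendsto_of_eventually_le_coe_add hmin hlim (EReal.coe_mul_ne_bot ha hRx) ?_
  filter_upwards [hF, hx, self_mem_nhdsWithin] with ε hFε hxε (hε : 0 < ε)
  calc ⨅ y, F ε y ≤ F ε x := iInf_le _ x
    _ = ((dist (Λ x) (Λε ε) ^ α / ε ^ γ : ℝ) : EReal) + a * R x := hFε x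
    _ ≤ ((ε ^ (α - γ) : ℝ) : EReal) + a * R x := by
      gcongr
      exact Real.rpow_div_rpow_le_rpow_sub dist_nonneg hxε hε hα.le

theorem eventually_le_div_and_rpow_div_rpow_le {b c : ℝ} (ha : 0 < a) (hb : ∀ x, (b : EReal) ≤ R x)
    (hF : ∀ᶠ ε in 𝓝[>] 0, ∀ x, F ε x = ((dist (Λ x) (Λε ε) ^ α / ε ^ γ : ℝ) : EReal) + a * R x)
    {u : ℝ → X} {m : EReal} (hu : Tendsto (fun ε => F ε (u ε)) (𝓝[>] 0) (𝓝 m)) (hmc : m < c) :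
    ∀ᶠ ε in 𝓝[>] 0,
      R (u ε) ≤ (c / a : ℝ) ∧ dist (Λ (u ε)) (Λε ε) ^ α / ε ^ γ ≤ c - a * b := by
  filter_upwards [hF, hu.eventually (gt_mem_nhds hmc), self_mem_nhdsWithin]
    with ε hFε hlt (hε : 0 < ε)
  rw [hFε] at hlt
  obtain ⟨r, hr, hle⟩ := EReal.exists_coe_of_coe_add_coe_mul_le ha (hb (u ε)) hlt.le
  have hbr : a * b ≤ a * r := mul_le_mul_of_nonneg_left (by exact_mod_cast hr ▸ hb (u ε)) ha.le
  have hD : 0 ≤ dist (Λ (u ε)) (Λε ε) ^ α / ε ^ γ := by positivity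
  refine ⟨hr ▸ EReal.coe_le_coe_iff.2 ((le_div_iff₀' ha).2 (by linarith)), by linarith⟩

end Regularisation

theorem regularised_solutions_subsequential_convergence_general
    {X Y : Type*} [MetricSpace X] [MetricSpace Y]
    (Λ : X → Y) (hΛ : Continuous Λ) (x0 : X)
    (R : X → EReal)
    (hRbot : ∀ x : X, R x ≠ ⊥)
    (hRlsc : LowerSemicontinuous R)
    (hRcompact : ∀ C : ℝ, 0 < C → IsCompact {x : X | R x ≤ (C : EReal)})
    (α γ a ε0 : ℝ)
    (hα : 0 < α) (hγ : 0 < γ) (hγα : γ < α) (ha : 0 < a) (hε0 : 0 < ε0)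
    (Λε : ℝ → Y) (hΛε : ∀ ε : ℝ, 0 < ε → ε ≤ ε0 → dist (Λε ε) (Λ x0) ≤ ε)
    (hR0 : R x0 ≠ ⊤)
    (F : ℝ → X → EReal)
    (hF : ∀ ε : ℝ, 0 < ε → ε ≤ ε0 → ∀ x : X,
      F ε x = ((dist (Λ x) (Λε ε) ^ α / ε ^ γ : ℝ) : EReal) + (a : EReal) * R x)
    (F0 : X → EReal)
    (hF0eq : ∀ x : X, Λ x = Λ x0 → F0 x = (a : EReal) * R x)
    (hF0top : ∀ x : X, Λ x ≠ Λ x0 → F0 x = ⊤)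
    (xt : ℝ → X) (m : EReal)
    (hxt : Tendsto (fun ε : ℝ => F ε (xt ε)) (𝓝[>] (0 : ℝ)) (𝓝 m))
    (hmin : Tendsto (fun ε : ℝ => ⨅ x : X, F ε x) (𝓝[>] (0 : ℝ)) (𝓝 m))
    (εs : ℕ → ℝ) (hεs : ∀ n : ℕ, 0 < εs n ∧ εs n ≤ ε0)
    (hεslim : Tendsto εs atTop (𝓝 0)) :
    ∃ φ : ℕ → ℕ, StrictMono φ ∧ ∃ xtlim : X,
      Tendsto (fun k => xt (εs (φ k))) atTop (𝓝 xtlim) ∧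
      (∀ x : X, F0 xtlim ≤ F0 x) ∧
      Λ xtlim = Λ x0 ∧
      (∀ x : X, Λ x = Λ x0 → R xtlim ≤ R x) := by
  have hIoc : ∀ᶠ ε in 𝓝[>] (0 : ℝ), ε ∈ Ioc 0 ε0 := Ioc_mem_nhdsGT hε0
  have hF' := hIoc.mono fun ε hε => hF ε hε.1 hε.2
  have hΛε' := hIoc.mono fun ε hε => hΛε ε hε.1 hε.2
  have hm_le : ∀ x, Λ x = Λ x0 → m ≤ a * R x := fun x hx =>
    le_coe_mul_of_tendsto_iInf hα hγα ha.le hF' hmin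
      (hΛε'.mono fun ε h => by rwa [hx, dist_comm]) (hRbot x)
  have hm_top : m < ⊤ := (hm_le x0 rfl).trans_lt (EReal.coe_mul_ne_top ha.le hR0).lt_top
  obtain ⟨b, hb⟩ := hRlsc.exists_coe_le_of_isCompact_sublevel hRbot (hRcompact 1 one_pos)
  obtain ⟨c, hmc, -⟩ := EReal.lt_iff_exists_real_btwn.1 hm_top
  have hbound := eventually_le_div_and_rpow_div_rpow_le ha hb hF' hxt hmc
  have hΛlim := tendsto_of_eventually_rpow_div_rpow_le hα hγ hΛε' (hbound.mono fun _ h => h.2)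
  have hεs' : Tendsto εs atTop (𝓝[>] 0) :=
    tendsto_nhdsWithin_of_tendsto_nhds_of_eventually_within εs hεslim (.of_forall (hεs · |>.1))
  obtain ⟨xtlim, -, φ, hφ, hconv⟩ := (hRcompact (max (c / a) 1) (by positivity)).tendsto_subseq'
    ((hεs'.eventually hbound).mono fun _ h => h.1.trans (by simp)).frequently
  have hψ : Tendsto (εs ∘ φ) atTop (𝓝[>] 0) := hεs'.comp hφ.tendsto_atTop
  have hΛeq : Λ xtlim = Λ x0 := tendsto_nhds_unique ((hΛ.tendsto xtlim).comp hconv) (hΛlim.comp hψ)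
  have haR : a * R xtlim ≤ m :=
    ((EReal.continuous_coe_mul a).comp_lowerSemicontinuous hRlsc
      fun _ _ h => (EReal.coe_mul_le_coe_mul_iff ha).2 h).le_of_tendsto hconv (hxt.comp hψ)
      (hψ.eventually ((eventually_coe_mul_le hF').mono fun _ h => h _))
  have hRmin : ∀ x, Λ x = Λ x0 → R xtlim ≤ R x := fun x hx =>
    (EReal.coe_mul_le_coe_mul_iff ha).1 (haR.trans (hm_le x hx))
  refine ⟨φ, hφ, xtlim, hconv, fun x => ?_, hΛeq, hRmin⟩
  by_cases hx : Λ x = Λ x0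
  · rw [hF0eq _ hΛeq, hF0eq _ hx]
    exact (EReal.coe_mul_le_coe_mul_iff ha).2 (hRmin x hx)
  · rw [hF0top _ hx]
    exact le_top

/-- Subsequential convergence of quasi-minimising families of regularised solutions:
if `x̃ ε` quasi-minimises `F ε` (namely `lim_{ε→0⁺} F ε (x̃ ε) = lim_{ε→0⁺} min_X F ε`),
then for every sequence of positive noise levels `εs n → 0` there is a subsequence along
which `x̃ (εs n)` converges to a minimiser `x̃lim` of `F0`; in particular
`Λ x̃lim = Λ x0` and `x̃lim` minimises `R` among solutions of `Λ x = Λ x0`. -/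
theorem regularised_solutions_subsequential_convergence
    {X Y : Type*} [MetricSpace X] [MetricSpace Y]
    (Λ : X → Y) (hΛ : Continuous Λ) (x0 : X)
    (R : X → EReal)
    (hRbot : ∀ x : X, R x ≠ ⊥)
    (hRnetop : ∃ x : X, R x ≠ ⊤)
    (hRlsc : LowerSemicontinuous R)
    (hRcompact : ∀ C : ℝ, 0 < C → IsCompact {x : X | R x ≤ (C : EReal)})
    (α γ a ε0 : ℝ)
    (hα : 0 < α) (hγ : 0 < γ) (hγα : γ < α) (ha : 0 < a) (hε0 : 0 < ε0)
    (Λε : ℝ → Y) (hΛε : ∀ ε : ℝ, 0 < ε → ε ≤ ε0 → dist (Λε ε) (Λ x0) ≤ ε)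
    (hR0 : R x0 ≠ ⊤)
    (F : ℝ → X → EReal)
    (hF : ∀ ε : ℝ, 0 < ε → ε ≤ ε0 → ∀ x : X,
      F ε x = ((dist (Λ x) (Λε ε) ^ α / ε ^ γ : ℝ) : EReal) + (a : EReal) * R x)
    (F0 : X → EReal)
    (hF0eq : ∀ x : X, Λ x = Λ x0 → F0 x = (a : EReal) * R x)
    (hF0top : ∀ x : X, Λ x ≠ Λ x0 → F0 x = ⊤)
    (xt : ℝ → X) (m : EReal)
    (hxt : Tendsto (fun ε : ℝ => F ε (xt ε)) (𝓝[>] (0 : ℝ)) (𝓝 m))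
    (hmin : Tendsto (fun ε : ℝ => ⨅ x : X, F ε x) (𝓝[>] (0 : ℝ)) (𝓝 m))
    (εs : ℕ → ℝ) (hεs : ∀ n : ℕ, 0 < εs n ∧ εs n ≤ ε0)
    (hεslim : Tendsto εs atTop (𝓝 0)) :
    ∃ φ : ℕ → ℕ, StrictMono φ ∧ ∃ xtlim : X,
      Tendsto (fun k => xt (εs (φ k))) atTop (𝓝 xtlim) ∧
      (∀ x : X, F0 xtlim ≤ F0 x) ∧
      Λ xtlim = Λ x0 ∧
      (∀ x : X, Λ x = Λ x0 → R xtlim ≤ R x) :=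
  regularised_solutions_subsequential_convergence_general Λ hΛ x0 R hRbot hRlsc hRcompact α γ a ε0
    hα hγ hγα ha hε0 Λε hΛε hR0 F hF F0 hF0eq hF0top xt m hxt hmin εs hεs hεslim
end

section
/- Full convergence under uniqueness of the F_0-minimiser: Under the regularisation setting, let {x̃_ε}_{0<ε≤ε0} ⊆ X satisfy lim_{ε→0+} F_ε(x̃_ε) = lim_{ε→0+} min_X F_ε. If F_0 admits a unique minimiser x̃ over X, then lim_{ε→0+} x̃_ε = x̃ in X. -/
open Filter Topology

/-! Testing `F ε` at points of `Λ⁻¹ {Λ x0}`, where the fidelity term is at most `ε ^ (α - γ)`,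
gives `m ≤ F0 x` for every `x`. So `F ε (xt ε)` is eventually below a real `B`, which traps
`xt ε` in the compact sublevel set `{a * R ≤ B}`; as `a * R` is bounded below there, the
fidelity term stays bounded, i.e. `dist (Λ (xt ε)) (Λε ε) = O(ε ^ (γ / α))`, and
`Λ (xt ε) → Λ x0`. A cluster point `z` of `xt` then has `Λ z = Λ x0` and, by lower
semicontinuity, `a * R z ≤ m ≤ F0 x`; so `z` minimises `F0` and equals `xm`. A map that eventually
stays in a compact set and has a unique cluster point converges to it. -/

theorem Real.rpow_div_rpow_le_rpow_sub_s5 {d ε α : ℝ} (γ : ℝ) (hd : 0 ≤ d) (hdε : d ≤ ε) (hε : 0 < ε)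
    (hα : 0 ≤ α) : d ^ α / ε ^ γ ≤ ε ^ (α - γ) := by
  rw [Real.rpow_sub hε]
  gcongr

theorem tendsto_rpow_nhdsGT_zero {p : ℝ} (hp : 0 < p) :
    Tendsto (fun ε : ℝ => ε ^ p) (𝓝[>] 0) (𝓝 0) :=
  ((Real.continuous_rpow_const hp.le).tendsto' 0 0 (Real.zero_rpow hp.ne')).mono_left
    nhdsWithin_le_nhds

theorem tendsto_zero_of_rpow_le {ι : Type*} {l : Filter ι} {f g : ι → ℝ} {α : ℝ} (hα : 0 < α)
    (hf : ∀ i, 0 ≤ f i) (hfg : ∀ᶠ i in l, f i ^ α ≤ g i) (hg : Tendsto g l (𝓝 0)) :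
    Tendsto f l (𝓝 0) := by
  have hg' : Tendsto (fun i => g i ^ α⁻¹) l (𝓝 0) :=
    ((Real.continuous_rpow_const (inv_nonneg.2 hα.le)).tendsto' 0 0
      (Real.zero_rpow (inv_ne_zero hα.ne'))).comp hg
  refine squeeze_zero' (Eventually.of_forall hf) (hfg.mono fun i hi => ?_) hg'
  exact (Real.le_rpow_inv_iff_of_pos (hf i) ((Real.rpow_nonneg (hf i) α).trans hi) hα).2 hi

theorem EReal.coe_mul_le_coe_iff {a : ℝ} (ha : 0 < a) {x : EReal} {b : ℝ} :
    (a : EReal) * x ≤ b ↔ x ≤ ((b / a : ℝ) : EReal) := by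
  rw [EReal.coe_div, EReal.le_div_iff_mul_le (by exact_mod_cast ha) (EReal.coe_ne_top a), mul_comm]

theorem LowerSemicontinuous.coe_mul {X : Type*} [TopologicalSpace X] {f : X → EReal}
    (hf : LowerSemicontinuous f) {a : ℝ} (ha : 0 ≤ a) :
    LowerSemicontinuous fun x => (a : EReal) * f x := by
  refine Continuous.comp_lowerSemicontinuous (g := fun y : EReal => (a : EReal) * y) ?_ hf
    fun _ _ h => mul_le_mul_of_nonneg_left h (by exact_mod_cast ha)
  exact continuous_iff_continuousAt.2 fun y =>
    EReal.Tendsto.const_mul tendsto_id (Or.inl (EReal.coe_ne_bot a)) (Or.inl (EReal.coe_ne_top a))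

theorem isCompact_setOf_coe_mul_le {X : Type*} [TopologicalSpace X] {R : X → EReal}
    (hR : LowerSemicontinuous R) (hRcompact : ∀ C : ℝ, 0 < C → IsCompact {x : X | R x ≤ C})
    {a : ℝ} (ha : 0 < a) (b : ℝ) : IsCompact {x | (a : EReal) * R x ≤ b} := by
  simp only [EReal.coe_mul_le_coe_iff ha]
  exact (hRcompact _ (lt_max_of_lt_right one_pos)).of_isClosed_subset (hR.isClosed_preimage _)
    fun x hx => le_trans hx (EReal.coe_le_coe_iff.2 (le_max_left _ 1))

theorem LowerSemicontinuousOn.exists_forall_coe_le_of_isCompact {X : Type*} [TopologicalSpace X]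
    {f : X → EReal} {K : Set X} (hf : LowerSemicontinuousOn f K) (hK : IsCompact K)
    (hbot : ∀ x ∈ K, f x ≠ ⊥) : ∃ c : ℝ, ∀ x ∈ K, (c : EReal) ≤ f x := by
  rcases K.eq_empty_or_nonempty with rfl | hne
  · exact ⟨0, by simp⟩
  obtain ⟨x₀, hx₀, hmin⟩ := hf.exists_isMinOn hne hK
  exact ⟨(f x₀).toReal, fun x hx => (EReal.coe_toReal_le (hbot x₀ hx₀)).trans (hmin hx)⟩

theorem LowerSemicontinuous.le_of_mapClusterPt {X β ι : Type*} [TopologicalSpace X]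
    [LinearOrder β] [DenselyOrdered β] [TopologicalSpace β] [OrderTopology β] {f : X → β}
    (hf : LowerSemicontinuous f) {l : Filter ι} {u : ι → X} {z : X} (hz : MapClusterPt z l u)
    {g : ι → β} {m : β} (hg : Tendsto g l (𝓝 m)) (hfg : ∀ᶠ i in l, f (u i) ≤ g i) : f z ≤ m := by
  by_contra! hlt
  obtain ⟨c, hmc, hcz⟩ := exists_between hlt
  obtain ⟨i, hci, hic⟩ :=
    ((hz.frequently (hf z c hcz)).and_eventually (hfg.and (hg.eventually_lt_const hmc))).exists
  exact (hci.trans_le hic.1).not_gt hic.2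

section Regularisation

variable {X Y : Type*} [PseudoMetricSpace Y] {Λ : X → Y} {x0 : X} {R : X → EReal}
  {α γ a ε0 : ℝ} {Λε : ℝ → Y} {F : ℝ → X → EReal}

theorem regularised_le_rpow_sub_add (hα : 0 < α)
    (hΛε : ∀ ε : ℝ, 0 < ε → ε ≤ ε0 → dist (Λε ε) (Λ x0) ≤ ε)
    (hF : ∀ ε : ℝ, 0 < ε → ε ≤ ε0 → ∀ x : X,
      F ε x = ((dist (Λ x) (Λε ε) ^ α / ε ^ γ : ℝ) : EReal) + (a : EReal) * R x)
    {ε : ℝ} (hε : ε ∈ Set.Ioc 0 ε0) {x : X} (hx : Λ x = Λ x0) :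
    F ε x ≤ ((ε ^ (α - γ) : ℝ) : EReal) + (a : EReal) * R x := by
  rw [hF ε hε.1 hε.2 x]
  gcongr
  refine Real.rpow_div_rpow_le_rpow_sub_s5 γ dist_nonneg ?_ hε.1 hα.le
  rw [hx, dist_comm]
  exact hΛε ε hε.1 hε.2

theorem le_of_tendsto_iInf_regularised (hα : 0 < α) (hγα : γ < α) (hε0 : 0 < ε0)
    (hΛε : ∀ ε : ℝ, 0 < ε → ε ≤ ε0 → dist (Λε ε) (Λ x0) ≤ ε)
    (hF : ∀ ε : ℝ, 0 < ε → ε ≤ ε0 → ∀ x : X,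
      F ε x = ((dist (Λ x) (Λε ε) ^ α / ε ^ γ : ℝ) : EReal) + (a : EReal) * R x)
    {F0 : X → EReal} (hF0eq : ∀ x : X, Λ x = Λ x0 → F0 x = (a : EReal) * R x)
    (hF0top : ∀ x : X, Λ x ≠ Λ x0 → F0 x = ⊤) {m : EReal}
    (hmin : Tendsto (fun ε : ℝ => ⨅ x : X, F ε x) (𝓝[>] (0 : ℝ)) (𝓝 m)) (x : X) :
    m ≤ F0 x := by
  by_cases hx : Λ x = Λ x0
  swap
  · rw [hF0top x hx]
    exact le_top
  rw [hF0eq x hx]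
  have hlim : Tendsto (fun ε : ℝ => ((ε ^ (α - γ) : ℝ) : EReal) + (a : EReal) * R x)
      (𝓝[>] 0) (𝓝 (0 + (a : EReal) * R x)) :=
    (EReal.continuousAt_add (Or.inl EReal.zero_ne_top) (Or.inl EReal.zero_ne_bot)).tendsto.comp
      ((EReal.tendsto_coe.2 (tendsto_rpow_nhdsGT_zero (sub_pos.2 hγα))).prodMk_nhds
        tendsto_const_nhds)
  refine le_of_tendsto_of_tendsto hmin (by simpa using hlim) ?_
  filter_upwards [Ioc_mem_nhdsGT hε0] with ε hε
  exact (iInf_le _ x).trans (regularised_le_rpow_sub_add hα hΛε hF hε hx)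

theorem tendsto_comp_of_regularised_lt (hα : 0 < α) (hγ : 0 < γ) (hε0 : 0 < ε0)
    (hΛε : ∀ ε : ℝ, 0 < ε → ε ≤ ε0 → dist (Λε ε) (Λ x0) ≤ ε)
    (hF : ∀ ε : ℝ, 0 < ε → ε ≤ ε0 → ∀ x : X,
      F ε x = ((dist (Λ x) (Λε ε) ^ α / ε ^ γ : ℝ) : EReal) + (a : EReal) * R x)
    {xt : ℝ → X} {B c : ℝ} (hB : ∀ᶠ ε in 𝓝[>] 0, F ε (xt ε) < B)
    (hc : ∀ᶠ ε in 𝓝[>] 0, (c : EReal) ≤ (a : EReal) * R (xt ε)) :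
    Tendsto (fun ε => Λ (xt ε)) (𝓝[>] 0) (𝓝 (Λ x0)) := by
  have hΛε_lim : Tendsto Λε (𝓝[>] 0) (𝓝 (Λ x0)) := by
    refine tendsto_iff_dist_tendsto_zero.2 (squeeze_zero' (Eventually.of_forall fun _ => dist_nonneg)
      ?_ (tendsto_nhdsWithin_of_tendsto_nhds tendsto_id))
    filter_upwards [Ioc_mem_nhdsGT hε0] with ε hε using hΛε ε hε.1 hε.2
  have hfid : ∀ᶠ ε in 𝓝[>] 0, dist (Λ (xt ε)) (Λε ε) ^ α ≤ (B - c) * ε ^ γ := by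
    filter_upwards [Ioc_mem_nhdsGT hε0, hB, hc] with ε hε hεB hεc
    have hsum : ((dist (Λ (xt ε)) (Λε ε) ^ α / ε ^ γ + c : ℝ) : EReal) < B := by
      refine lt_of_le_of_lt ?_ hεB
      rw [hF ε hε.1 hε.2, EReal.coe_add]
      gcongr
    rw [← div_le_iff₀ (Real.rpow_pos_of_pos hε.1 γ)]
    linarith [EReal.coe_lt_coe_iff.1 hsum]
  refine hΛε_lim.congr_dist ?_
  simpa only [dist_comm] using tendsto_zero_of_rpow_le hα (fun _ => dist_nonneg) hfid
    (by simpa using (tendsto_rpow_nhdsGT_zero hγ).const_mul (B - c))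

end Regularisation

theorem regularised_solutions_full_convergence_unique_minimiser_general
    {X Y : Type*} [MetricSpace X] [MetricSpace Y]
    (Λ : X → Y) (hΛ : Continuous Λ) (x0 : X)
    (R : X → EReal)
    (hRbot : ∀ x : X, R x ≠ ⊥)
    (hRlsc : LowerSemicontinuous R)
    (hRcompact : ∀ C : ℝ, 0 < C → IsCompact {x : X | R x ≤ (C : EReal)})
    (α γ a ε0 : ℝ)
    (hα : 0 < α) (hγ : 0 < γ) (hγα : γ < α) (ha : 0 < a) (hε0 : 0 < ε0)
    (Λε : ℝ → Y) (hΛε : ∀ ε : ℝ, 0 < ε → ε ≤ ε0 → dist (Λε ε) (Λ x0) ≤ ε)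
    (hR0 : R x0 ≠ ⊤)
    (F : ℝ → X → EReal)
    (hF : ∀ ε : ℝ, 0 < ε → ε ≤ ε0 → ∀ x : X,
      F ε x = ((dist (Λ x) (Λε ε) ^ α / ε ^ γ : ℝ) : EReal) + (a : EReal) * R x)
    (F0 : X → EReal)
    (hF0eq : ∀ x : X, Λ x = Λ x0 → F0 x = (a : EReal) * R x)
    (hF0top : ∀ x : X, Λ x ≠ Λ x0 → F0 x = ⊤)
    (xt : ℝ → X) (m : EReal)
    (hxt : Tendsto (fun ε : ℝ => F ε (xt ε)) (𝓝[>] (0 : ℝ)) (𝓝 m))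
    (hmin : Tendsto (fun ε : ℝ => ⨅ x : X, F ε x) (𝓝[>] (0 : ℝ)) (𝓝 m))
    (xm : X)
    (huniq : ∀ z : X, (∀ x : X, F0 z ≤ F0 x) → z = xm) :
    Tendsto (fun ε : ℝ => xt ε) (𝓝[>] (0 : ℝ)) (𝓝 xm) := by
  have hmF0 := le_of_tendsto_iInf_regularised hα hγα hε0 hΛε hF hF0eq hF0top hmin
  have hS := hRlsc.coe_mul ha.le
  obtain ⟨B, hmB, -⟩ : ∃ B : ℝ, m < B ∧ (B : EReal) < ⊤ := by
    refine EReal.exists_between_coe_real ((hmF0 x0).trans_lt (lt_top_iff_ne_top.2 ?_))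
    rw [hF0eq x0 rfl]
    exact (EReal.mul_ne_top _ _).2 ⟨.inl (EReal.coe_ne_bot a), .inl (EReal.coe_nonneg.2 ha.le),
      .inl (EReal.coe_ne_top a), .inr hR0⟩
  have hK := isCompact_setOf_coe_mul_le hRlsc hRcompact ha B
  have hFB : ∀ᶠ ε in 𝓝[>] 0, F ε (xt ε) < B := hxt.eventually_lt_const hmB
  have hSF : ∀ᶠ ε in 𝓝[>] 0, (a : EReal) * R (xt ε) ≤ F ε (xt ε) := by
    filter_upwards [Ioc_mem_nhdsGT hε0] with ε hε
    rw [hF ε hε.1 hε.2]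
    exact le_add_of_nonneg_left (EReal.coe_nonneg.2
      (div_nonneg (Real.rpow_nonneg dist_nonneg α) (Real.rpow_nonneg hε.1.le γ)))
  have hxtK : ∀ᶠ ε in 𝓝[>] 0, xt ε ∈ {x | (a : EReal) * R x ≤ B} :=
    (hSF.and hFB).mono fun ε h => h.1.trans h.2.le
  obtain ⟨c, hc⟩ := (hS.lowerSemicontinuousOn _).exists_forall_coe_le_of_isCompact hK fun x _ =>
    (EReal.mul_ne_bot _ _).2 ⟨.inl (EReal.coe_ne_bot a), .inr (hRbot x),
      .inl (EReal.coe_ne_top a), .inl (EReal.coe_nonneg.2 ha.le)⟩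
  have hΛxt := tendsto_comp_of_regularised_lt hα hγ hε0 hΛε hF hFB (hxtK.mono fun ε h => hc _ h)
  refine hK.tendsto_nhds_of_unique_mapClusterPt hxtK fun z _ hz => huniq z fun x => ?_
  have hΛz : Λ z = Λ x0 :=
    eq_of_nhds_neBot ((hz.continuousAt_comp hΛ.continuousAt).clusterPt.mono hΛxt)
  rw [hF0eq z hΛz]
  exact (hS.le_of_mapClusterPt hz hxt hSF).trans (hmF0 x)

/-- Full convergence under uniqueness of the `F0`-minimiser: if `x̃ ε` quasi-minimises
`F ε` (namely `lim_{ε→0⁺} F ε (x̃ ε) = lim_{ε→0⁺} min_X F ε`) and `F0` admits a unique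
minimiser `xm` over `X`, then `x̃ ε → xm` as `ε → 0⁺`. -/
theorem regularised_solutions_full_convergence_unique_minimiser
    {X Y : Type*} [MetricSpace X] [MetricSpace Y]
    (Λ : X → Y) (hΛ : Continuous Λ) (x0 : X)
    (R : X → EReal)
    (hRbot : ∀ x : X, R x ≠ ⊥)
    (hRnetop : ∃ x : X, R x ≠ ⊤)
    (hRlsc : LowerSemicontinuous R)
    (hRcompact : ∀ C : ℝ, 0 < C → IsCompact {x : X | R x ≤ (C : EReal)})
    (α γ a ε0 : ℝ)
    (hα : 0 < α) (hγ : 0 < γ) (hγα : γ < α) (ha : 0 < a) (hε0 : 0 < ε0)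
    (Λε : ℝ → Y) (hΛε : ∀ ε : ℝ, 0 < ε → ε ≤ ε0 → dist (Λε ε) (Λ x0) ≤ ε)
    (hR0 : R x0 ≠ ⊤)
    (F : ℝ → X → EReal)
    (hF : ∀ ε : ℝ, 0 < ε → ε ≤ ε0 → ∀ x : X,
      F ε x = ((dist (Λ x) (Λε ε) ^ α / ε ^ γ : ℝ) : EReal) + (a : EReal) * R x)
    (F0 : X → EReal)
    (hF0eq : ∀ x : X, Λ x = Λ x0 → F0 x = (a : EReal) * R x)
    (hF0top : ∀ x : X, Λ x ≠ Λ x0 → F0 x = ⊤)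
    (xt : ℝ → X) (m : EReal)
    (hxt : Tendsto (fun ε : ℝ => F ε (xt ε)) (𝓝[>] (0 : ℝ)) (𝓝 m))
    (hmin : Tendsto (fun ε : ℝ => ⨅ x : X, F ε x) (𝓝[>] (0 : ℝ)) (𝓝 m))
    (xm : X) (hxm : ∀ x : X, F0 xm ≤ F0 x)
    (huniq : ∀ z : X, (∀ x : X, F0 z ≤ F0 x) → z = xm) :
    Tendsto (fun ε : ℝ => xt ε) (𝓝[>] (0 : ℝ)) (𝓝 xm) :=
  regularised_solutions_full_convergence_unique_minimiser_general Λ hΛ x0 R hRbot hRlsc hRcompact α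
    γ a ε0 hα hγ hγα ha hε0 Λε hΛε hR0 F hF F0 hF0eq hF0top xt m hxt hmin xm huniq
end

section
/- Convergence to the true unknown under injectivity of the forward map: Under the regularisation setting, assume in addition that Λ is injective on the set {x ∈ X : R(x) < +∞}. Let {x̃_ε}_{0<ε≤ε0} ⊆ X satisfy limsup_{ε→0+} F_ε(x̃_ε) < +∞. Then lim_{ε→0+} x̃_ε = x0 in X. -/
open Filter Topology Set

/-- A lower semicontinuous `EReal`-valued function avoiding `⊥` is bounded below
by a real number on any compact set. -/
lemma lsc_bddBelow_on_compact {X : Type*} [TopologicalSpace X] {R : X → EReal}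
    (hlsc : LowerSemicontinuous R) (hbot : ∀ x, R x ≠ ⊥) {K : Set X} (hK : IsCompact K) :
    ∃ m : ℝ, ∀ x ∈ K, (m : EReal) ≤ R x := by
  have hcov : K ⊆ ⋃ r : ℝ, {x | (r : EReal) < R x} := by
    intro x _
    have hx : (⊥ : EReal) < R x := (hbot x).bot_lt
    obtain ⟨r, _, hr⟩ := EReal.lt_iff_exists_real_btwn.mp hx
    exact mem_iUnion.2 ⟨r, hr⟩
  obtain ⟨t, ht⟩ := hK.elim_finite_subcover (fun r : ℝ => {x | (r : EReal) < R x})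
    (fun r => hlsc.isOpen_preimage (r : EReal)) hcov
  rcases t.eq_empty_or_nonempty with rfl | hne
  · refine ⟨0, fun x hx => ?_⟩
    simpa using ht hx
  · refine ⟨t.min' hne, fun x hx => ?_⟩
    obtain ⟨r, hrt, hrx⟩ := mem_iUnion₂.1 (ht hx)
    exact le_trans (EReal.coe_le_coe_iff.2 (t.min'_le r hrt)) hrx.le

/-- Convergence to the true unknown under injectivity of the forward map:
if `Λ` is injective on `{x : R x < +∞}` and the family `x̃ ε` satisfies
`limsup_{ε→0⁺} F ε (x̃ ε) < +∞`, then `x̃ ε → x0` as `ε → 0⁺`. -/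
theorem regularised_solutions_converge_to_unknown
    {X Y : Type*} [MetricSpace X] [MetricSpace Y]
    (Λ : X → Y) (hΛ : Continuous Λ) (x0 : X)
    (R : X → EReal)
    (hRbot : ∀ x : X, R x ≠ ⊥)
    (hRnetop : ∃ x : X, R x ≠ ⊤)
    (hRlsc : LowerSemicontinuous R)
    (hRcompact : ∀ C : ℝ, 0 < C → IsCompact {x : X | R x ≤ (C : EReal)})
    (α γ a ε0 : ℝ)
    (hα : 0 < α) (hγ : 0 < γ) (hγα : γ < α) (ha : 0 < a) (hε0 : 0 < ε0)
    (Λε : ℝ → Y) (hΛε : ∀ ε : ℝ, 0 < ε → ε ≤ ε0 → dist (Λε ε) (Λ x0) ≤ ε)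
    (hR0 : R x0 ≠ ⊤)
    (F : ℝ → X → EReal)
    (hF : ∀ ε : ℝ, 0 < ε → ε ≤ ε0 → ∀ x : X,
      F ε x = ((dist (Λ x) (Λε ε) ^ α / ε ^ γ : ℝ) : EReal) + (a : EReal) * R x)
    (hinj : ∀ x y : X, R x ≠ ⊤ → R y ≠ ⊤ → Λ x = Λ y → x = y)
    (xt : ℝ → X)
    (hbound : limsup (fun ε : ℝ => F ε (xt ε)) (𝓝[>] (0 : ℝ)) < ⊤) :
    Tendsto (fun ε : ℝ => xt ε) (𝓝[>] (0 : ℝ)) (𝓝 x0) := by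
  set l : Filter ℝ := 𝓝[>] (0 : ℝ) with hl
  -- get a real bound `M` for the limsup
  obtain ⟨M, hM1, hM2⟩ := EReal.lt_iff_exists_real_btwn.mp hbound
  have hev1 : ∀ᶠ ε in l, F ε (xt ε) ≤ (M : EReal) :=
    (eventually_lt_of_limsup_lt hM1).mono fun ε h => h.le
  have hev0 : ∀ᶠ ε in l, 0 < ε := eventually_mem_nhdsWithin
  have hevε0 : ∀ᶠ ε in l, ε ≤ ε0 := by
    have h : ∀ᶠ ε in 𝓝 (0 : ℝ), ε ≤ ε0 := by
      filter_upwards [Iio_mem_nhds hε0] with ε (h : ε < ε0) using h.le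
    exact h.filter_mono nhdsWithin_le_nhds
  -- global lower bound for R
  obtain ⟨m0, hm0⟩ := lsc_bddBelow_on_compact hRlsc hRbot (hRcompact 1 one_pos)
  set m : ℝ := min m0 1 with hmdef
  have hm : ∀ x, (m : EReal) ≤ R x := by
    intro x
    by_cases hx : R x ≤ ((1 : ℝ) : EReal)
    · exact le_trans (EReal.coe_le_coe_iff.2 (min_le_left _ _)) (hm0 x hx)
    · exact le_trans (EReal.coe_le_coe_iff.2 (min_le_right _ _)) (not_le.1 hx).le
  set C : ℝ := max (M / a) 1 with hCdef
  have hC : 0 < C := lt_of_lt_of_le one_pos (le_max_right _ _)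
  set M1 : ℝ := max (M - a * m) 0 with hM1def
  have hM1nonneg : 0 ≤ M1 := le_max_right _ _
  -- the key eventual estimates
  have key : ∀ᶠ ε in l, R (xt ε) ≤ (C : EReal) ∧
      dist (Λ (xt ε)) (Λε ε) ^ α ≤ M1 * ε ^ γ := by
    filter_upwards [hev0, hevε0, hev1] with ε hε hεε0 hFle
    rw [hF ε hε hεε0] at hFle
    set D : ℝ := dist (Λ (xt ε)) (Λε ε) with hD
    have hεγ : (0 : ℝ) < ε ^ γ := Real.rpow_pos_of_pos hε γ
    have hDα : (0 : ℝ) ≤ D ^ α := Real.rpow_nonneg dist_nonneg α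
    have hq0 : (0 : ℝ) ≤ D ^ α / ε ^ γ := div_nonneg hDα hεγ.le
    have htop : R (xt ε) ≠ ⊤ := by
      intro h
      rw [h] at hFle
      have h1 : ((a : EReal)) * (⊤ : EReal) = ⊤ := EReal.mul_top_of_pos (by exact_mod_cast ha)
      rw [h1, EReal.add_top_of_ne_bot (EReal.coe_ne_bot _)] at hFle
      exact (not_le.2 (EReal.coe_lt_top M)) hFle
    lift R (xt ε) to ℝ using ⟨htop, hRbot _⟩ with r hr
    have hmr : m ≤ r := EReal.coe_le_coe_iff.1 (by rw [hr]; exact hm (xt ε))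
    rw [← EReal.coe_mul, ← EReal.coe_add, EReal.coe_le_coe_iff] at hFle
    constructor
    · rw [EReal.coe_le_coe_iff]
      have har : a * r ≤ M := by linarith
      have : r ≤ M / a := (le_div_iff₀ ha).2 (by linarith [mul_comm a r])
      exact this.trans (le_max_left _ _)
    · have h2 : D ^ α / ε ^ γ ≤ M - a * m := by nlinarith
      have h3 : D ^ α / ε ^ γ ≤ M1 := h2.trans (le_max_left _ _)
      exact (div_le_iff₀ hεγ).1 h3
  have hmemK : ∀ᶠ ε in l, xt ε ∈ {x : X | R x ≤ (C : EReal)} := key.mono fun ε h => h.1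
  -- Λ (xt ε) → Λ x0
  have hεγtend : Tendsto (fun ε : ℝ => ε ^ γ) l (𝓝 0) := by
    have h := (Real.continuousAt_rpow_const 0 γ (Or.inr hγ.le)).tendsto
    rw [Real.zero_rpow hγ.ne'] at h
    exact h.mono_left nhdsWithin_le_nhds
  have hbtend : Tendsto (fun ε : ℝ => (M1 * ε ^ γ) ^ α⁻¹ + ε) l (𝓝 0) := by
    have h1 : Tendsto (fun ε : ℝ => M1 * ε ^ γ) l (𝓝 0) := by
      have := hεγtend.const_mul M1
      simpa using this
    have h2 : Tendsto (fun t : ℝ => t ^ α⁻¹) (𝓝 0) (𝓝 0) := by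
      have h := (Real.continuousAt_rpow_const 0 α⁻¹ (Or.inr (inv_nonneg.2 hα.le))).tendsto
      rwa [Real.zero_rpow (inv_ne_zero hα.ne')] at h
    have h3 : Tendsto (fun ε : ℝ => (M1 * ε ^ γ) ^ α⁻¹) l (𝓝 0) := h2.comp h1
    have h4 : Tendsto (fun ε : ℝ => ε) l (𝓝 0) := tendsto_id.mono_left nhdsWithin_le_nhds
    simpa using h3.add h4
  have hΛtend : Tendsto (fun ε : ℝ => Λ (xt ε)) l (𝓝 (Λ x0)) := by
    rw [tendsto_iff_dist_tendsto_zero]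
    apply squeeze_zero' (Eventually.of_forall fun ε => dist_nonneg) _ hbtend
    filter_upwards [hev0, hevε0, key] with ε hε hεε0 hkey
    have hD : dist (Λ (xt ε)) (Λε ε) ≤ (M1 * ε ^ γ) ^ α⁻¹ := by
      have hDnn : (0 : ℝ) ≤ dist (Λ (xt ε)) (Λε ε) := dist_nonneg
      have := Real.rpow_le_rpow (Real.rpow_nonneg hDnn α) hkey.2 (inv_nonneg.2 hα.le)
      rwa [Real.rpow_rpow_inv hDnn hα.ne'] at this
    calc dist (Λ (xt ε)) (Λ x0) ≤ dist (Λ (xt ε)) (Λε ε) + dist (Λε ε) (Λ x0) := dist_triangle _ _ _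
      _ ≤ (M1 * ε ^ γ) ^ α⁻¹ + ε := add_le_add hD (hΛε ε hε hεε0)
  -- conclude via uniqueness of cluster points in the compact sublevel set
  apply (hRcompact C hC).tendsto_nhds_of_unique_mapClusterPt hmemK
  intro x hx hclus
  have hΛx : MapClusterPt (Λ x) l (fun ε => Λ (xt ε)) := hclus.continuousAt_comp hΛ.continuousAt
  have hcl : ClusterPt (Λ x) (𝓝 (Λ x0)) := hΛx.clusterPt.mono hΛtend
  have hEq : Λ x = Λ x0 := eq_of_nhds_neBot hcl
  have hxne : R x ≠ ⊤ := (lt_of_le_of_lt hx (EReal.coe_lt_top C)).ne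
  exact hinj x x0 hxne hR0 hEq
end

section
/- Γ-liminf inequality for the discretised regularised functionals: Under the discretised regularisation setting, let {σ_n} ⊆ X with σ_n → σ in X. Then F_0(σ) ≤ liminf_n F_n(σ_n). -/
open Filter Topology
open scoped ENNReal

/-!
Split according to whether `Λ σ = Λ σ0`. If so, `F0 σ = ã R σ`, and the regularisation term of
`F n (σs n)` alone already dominates it in the limit, by lower semicontinuity of `R`. If not, the
misfit `‖Λ (σs n) - Lam n‖` converges to `‖Λ σ - Λ σ0‖ > 0` while `ε n ^ γ → 0⁺`, so the fidelity
term, and with it `F n (σs n)`, tends to `⊤ = F0 σ`.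
-/

theorem LowerSemicontinuousAt.le_liminf_of_tendsto {α β γ : Type*} [TopologicalSpace α]
    [CompleteLinearOrder γ] {f : α → γ} {x : α} (hf : LowerSemicontinuousAt f x)
    {u : β → α} {l : Filter β} (hu : Tendsto u l (𝓝 x)) :
    f x ≤ liminf (fun n => f (u n)) l :=
  hf.le_liminf.trans (liminf_le_liminf_of_le hu)

theorem tendsto_of_norm_sub_le {β E : Type*} [SeminormedAddCommGroup E] {l : Filter β}
    {u : β → E} {y : E} {ε : β → ℝ} (hu : ∀ n, ‖u n - y‖ ≤ ε n) (hε : Tendsto ε l (𝓝 0)) :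
    Tendsto u l (𝓝 y) :=
  tendsto_iff_norm_sub_tendsto_zero.2 (squeeze_zero (fun _ => norm_nonneg _) hu hε)

theorem tendsto_rpow_div_rpow_atTop {β : Type*} {l : Filter β} {u ε : β → ℝ} {c α γ : ℝ}
    (hc : 0 < c) (hu : Tendsto u l (𝓝 c)) (hγ : 0 < γ) (hε : Tendsto ε l (𝓝[>] 0)) :
    Tendsto (fun n => u n ^ α / ε n ^ γ) l atTop := by
  have hnum : Tendsto (fun n => u n ^ α) l (𝓝 (c ^ α)) := hu.rpow_const (Or.inl hc.ne')
  have hden : Tendsto (fun n => (ε n ^ γ)⁻¹) l atTop := by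
    refine ((tendsto_rpow_neg_nhdsGT_zero (neg_neg_of_pos hγ)).comp hε).congr' ?_
    filter_upwards [hε self_mem_nhdsWithin] with n hn
    exact Real.rpow_neg (le_of_lt hn) γ
  simpa only [div_eq_mul_inv] using hnum.pos_mul_atTop (Real.rpow_pos_of_pos hc α) hden

theorem gamma_liminf_discretised_general
    {X Y : Type*} [MetricSpace X] [NormedAddCommGroup Y]
    (Λ : X → Y) (hΛ : Continuous Λ) (σ0 : X)
    (R : X → ℝ≥0∞) (hRlsc : LowerSemicontinuous R)
    (α γ a : ℝ)
    (hγ : 0 < γ)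
    (ε : ℕ → ℝ) (hεpos : ∀ n : ℕ, 0 < ε n)
    (hεlim : Tendsto ε atTop (𝓝 0))
    (Lam : ℕ → Y) (hLam : ∀ n : ℕ, ‖Lam n - Λ σ0‖ ≤ ε n)
    (Xn : ℕ → Set X)
    (F : ℕ → X → ℝ≥0∞)
    (hFin : ∀ n : ℕ, ∀ σ ∈ Xn n, F n σ =
      ENNReal.ofReal (‖Λ σ - Lam n‖ ^ α / ε n ^ γ) + ENNReal.ofReal a * R σ)
    (hFout : ∀ n : ℕ, ∀ σ ∉ Xn n, F n σ = ⊤)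
    (F0 : X → ℝ≥0∞)
    (hF0in : ∀ σ : X, ‖Λ σ - Λ σ0‖ = 0 → F0 σ = ENNReal.ofReal a * R σ)
    (hF0out : ∀ σ : X, ‖Λ σ - Λ σ0‖ ≠ 0 → F0 σ = ⊤)
    (σs : ℕ → X) (σ : X) (hσ : Tendsto σs atTop (𝓝 σ)) :
    F0 σ ≤ liminf (fun n => F n (σs n)) atTop := by
  have hF : ∀ n, ENNReal.ofReal (‖Λ (σs n) - Lam n‖ ^ α / ε n ^ γ) +
      ENNReal.ofReal a * R (σs n) ≤ F n (σs n) := fun n => by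
    by_cases hn : σs n ∈ Xn n
    · exact (hFin n _ hn).ge
    · exact (hFout n _ hn).symm ▸ le_top
  have hmisfit : Tendsto (fun n => ‖Λ (σs n) - Lam n‖) atTop (𝓝 ‖Λ σ - Λ σ0‖) :=
    (((hΛ.tendsto σ).comp hσ).sub (tendsto_of_norm_sub_le hLam hεlim)).norm
  rcases (norm_nonneg (Λ σ - Λ σ0)).eq_or_lt with h0 | hpos
  · calc F0 σ = ENNReal.ofReal a * R σ := hF0in σ h0.symm
      _ ≤ ENNReal.ofReal a * liminf (fun n => R (σs n)) atTop := by
        gcongr; exact (hRlsc.lowerSemicontinuousAt σ).le_liminf_of_tendsto hσ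
      _ = liminf (fun n => ENNReal.ofReal a * R (σs n)) atTop :=
        (ENNReal.liminf_const_mul_of_ne_top ENNReal.ofReal_ne_top).symm
      _ ≤ liminf (fun n => F n (σs n)) atTop :=
        liminf_le_liminf (Eventually.of_forall fun n => le_add_self.trans (hF n))
  · have hε : Tendsto ε atTop (𝓝[>] 0) :=
      tendsto_nhdsWithin_iff.2 ⟨hεlim, Eventually.of_forall hεpos⟩
    have hfidelity : Tendsto (fun n => ENNReal.ofReal (‖Λ (σs n) - Lam n‖ ^ α / ε n ^ γ))
        atTop (𝓝 ⊤) :=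
      ENNReal.tendsto_ofReal_atTop.comp (tendsto_rpow_div_rpow_atTop hpos hmisfit hγ hε)
    rw [hF0out σ hpos.ne', ← hfidelity.liminf_eq]
    exact liminf_le_liminf (Eventually.of_forall fun n => le_self_add.trans (hF n))

/-- Γ-liminf inequality for the discretised regularised functionals:
if `σs n → σ` in `X`, then `F0 σ ≤ liminf_n F n (σs n)`. -/
theorem gamma_liminf_discretised
    {X Y : Type*} [MetricSpace X] [NormedAddCommGroup Y] [NormedSpace ℝ Y]
    (Λ : X → Y) (hΛ : Continuous Λ) (σ0 : X)
    (R : X → ℝ≥0∞) (hRlsc : LowerSemicontinuous R)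
    (α γ a ε0 : ℝ)
    (hα : 0 < α) (hγ : 0 < γ) (hγα : γ < α) (ha : 0 < a) (hε0 : 0 < ε0)
    (ε : ℕ → ℝ) (hεpos : ∀ n : ℕ, 0 < ε n) (hεle : ∀ n : ℕ, ε n ≤ ε0)
    (hεlim : Tendsto ε atTop (𝓝 0))
    (Lam : ℕ → Y) (hLam : ∀ n : ℕ, ‖Lam n - Λ σ0‖ ≤ ε n)
    (Xn : ℕ → Set X)
    (F : ℕ → X → ℝ≥0∞)
    (hFin : ∀ n : ℕ, ∀ σ ∈ Xn n, F n σ =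
      ENNReal.ofReal (‖Λ σ - Lam n‖ ^ α / ε n ^ γ) + ENNReal.ofReal a * R σ)
    (hFout : ∀ n : ℕ, ∀ σ ∉ Xn n, F n σ = ⊤)
    (F0 : X → ℝ≥0∞)
    (hF0in : ∀ σ : X, ‖Λ σ - Λ σ0‖ = 0 → F0 σ = ENNReal.ofReal a * R σ)
    (hF0out : ∀ σ : X, ‖Λ σ - Λ σ0‖ ≠ 0 → F0 σ = ⊤)
    (σs : ℕ → X) (σ : X) (hσ : Tendsto σs atTop (𝓝 σ)) :
    F0 σ ≤ liminf (fun n => F n (σs n)) atTop :=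
  gamma_liminf_discretised_general Λ hΛ σ0 R hRlsc α γ a hγ ε hεpos hεlim Lam hLam Xn F hFin hFout
    F0 hF0in hF0out σs σ hσ
end

section
/- Equicoercivity of the discretised regularised functionals: Under the discretised regularisation setting, assume in addition that for every constant c > 0 the sublevel set {σ ∈ X : R(σ) ≤ c} is a compact subset of X, and that there exists a constant C such that inf_X F_n ≤ C for every n. Then the family {F_n} is equicoercive: there exists a compact set K ⊆ X such that inf_K F_n = inf_X F_n for every n. -/
open Filter Topology
open scoped ENNReal

/-- Equicoercivity of the discretised regularised functionals: if the sublevel sets of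
`R` are compact and the infima `inf_X F n` are uniformly bounded by a constant, then
there is a compact `K ⊆ X` with `inf_K F n = inf_X F n` for every `n`. -/
theorem equicoercivity_discretised
    {X Y : Type*} [MetricSpace X] [NormedAddCommGroup Y] [NormedSpace ℝ Y]
    (Λ : X → Y) (hΛ : Continuous Λ) (σ0 : X)
    (R : X → ℝ≥0∞) (hRlsc : LowerSemicontinuous R)
    (hRcompact : ∀ c : ℝ, 0 < c → IsCompact {σ : X | R σ ≤ ENNReal.ofReal c})
    (α γ a ε0 : ℝ)
    (hα : 0 < α) (hγ : 0 < γ) (hγα : γ < α) (ha : 0 < a) (hε0 : 0 < ε0)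
    (ε : ℕ → ℝ) (hεpos : ∀ n : ℕ, 0 < ε n) (hεle : ∀ n : ℕ, ε n ≤ ε0)
    (hεlim : Tendsto ε atTop (𝓝 0))
    (Lam : ℕ → Y) (hLam : ∀ n : ℕ, ‖Lam n - Λ σ0‖ ≤ ε n)
    (Xn : ℕ → Set X)
    (F : ℕ → X → ℝ≥0∞)
    (hFin : ∀ n : ℕ, ∀ σ ∈ Xn n, F n σ =
      ENNReal.ofReal (‖Λ σ - Lam n‖ ^ α / ε n ^ γ) + ENNReal.ofReal a * R σ)
    (hFout : ∀ n : ℕ, ∀ σ ∉ Xn n, F n σ = ⊤)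
    (C : ℝ) (hC : ∀ n : ℕ, ⨅ σ : X, F n σ ≤ ENNReal.ofReal C) :
    ∃ K : Set X, IsCompact K ∧ ∀ n : ℕ, ⨅ σ ∈ K, F n σ = ⨅ σ : X, F n σ := by
  set c : ℝ := (max C 0 + a) / a with hc
  have hcpos : 0 < c := div_pos (by positivity) ha
  refine ⟨{σ : X | R σ ≤ ENNReal.ofReal c}, hRcompact c hcpos, fun n => ?_⟩
  refine le_antisymm ?_ (le_iInf₂ fun σ _ => iInf_le _ σ)
  set m := ⨅ σ : X, F n σ with hm
  refine ENNReal.le_of_forall_pos_le_add fun δ hδ hmtop => ?_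
  set η : ℝ≥0∞ := min (δ : ℝ≥0∞) (ENNReal.ofReal a) with hη
  have hηpos : 0 < η := lt_min (by exact_mod_cast hδ) (by simp [ha])
  have hlt : m < m + η := ENNReal.lt_add_right hmtop.ne hηpos.ne'
  obtain ⟨σ, hσ⟩ := iInf_lt_iff.mp hlt
  have hσXn : σ ∈ Xn n := by
    by_contra h
    rw [hFout n σ h] at hσ
    exact (lt_irrefl _ (hσ.trans_le le_top)).elim
  have hFσ : F n σ ≤ ENNReal.ofReal C + ENNReal.ofReal a :=
    hσ.le.trans (add_le_add (hC n) (min_le_right _ _))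
  have hRσ : R σ ≤ ENNReal.ofReal c := by
    have h1 : ENNReal.ofReal a * R σ ≤ ENNReal.ofReal (max C 0 + a) := by
      calc ENNReal.ofReal a * R σ ≤ F n σ := by
            rw [hFin n σ hσXn]; exact le_add_self
        _ ≤ ENNReal.ofReal C + ENNReal.ofReal a := hFσ
        _ ≤ ENNReal.ofReal (max C 0) + ENNReal.ofReal a :=
            add_le_add (ENNReal.ofReal_le_ofReal (le_max_left _ _)) le_rfl
        _ = ENNReal.ofReal (max C 0 + a) :=
            (ENNReal.ofReal_add (le_max_right _ _) ha.le).symm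
    have h2 : R σ ≤ ENNReal.ofReal (max C 0 + a) / ENNReal.ofReal a :=
      (ENNReal.le_div_iff_mul_le (Or.inl (by simp [ha])) (Or.inl ENNReal.ofReal_ne_top)).mpr
        (by rwa [mul_comm] at h1)
    rwa [← ENNReal.ofReal_div_of_pos ha] at h2
  calc ⨅ σ' ∈ {σ : X | R σ ≤ ENNReal.ofReal c}, F n σ' ≤ F n σ := iInf₂_le σ hRσ
    _ ≤ m + η := hσ.le
    _ ≤ m + δ := add_le_add le_rfl (min_le_left _ _)
end

section
/- Almost optimal profiles for the Modica–Mortola transition energy: Let V : ℝ → ℝ be a continuous function with V ≥ 0 everywhere, and set c_V = ∫_0^1 √(V(t)) dt. Then for every δ > 0 there exist T > 0 and a continuously differentiable function v : [0,T] → ℝ with v(0) = 0, v(T) = 1, and 0 ≤ v(t) ≤ 1 for all t ∈ [0,T], such that ∫_0^T ( V(v(t)) + (v'(t))² ) dt ≤ 2 c_V + δ. -/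
/-!
For `ε > 0` let `v` solve the autonomous equation `v' = √(V v + ε)`, `v 0 = 0`, obtained by
inverting `x ↦ ∫₀ˣ (V + ε)^(-1/2)`; freezing `V` outside `[0,1]` keeps `V` bounded, so the
solution is global and reaches `1` at some time `T`. Along it `V v + v'² ≤ 2 v' √(V v + ε)`,
so the substitution `u = v t` bounds the energy by `2 ∫₀¹ √(V + ε) ≤ 2 c_V + 2 √ε`.
-/

open Real Set Filter intervalIntegral

theorem surjective_of_pos_le_deriv {f : ℝ → ℝ} (hf : Differentiable ℝ f) {C : ℝ}
    (hC : 0 < C) (hf' : ∀ x, C ≤ deriv f x) : Function.Surjective f := by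
  have slope := mul_sub_le_image_sub_of_le_deriv hf hf'
  refine hf.continuous.surjective ?_ ?_
  · refine tendsto_atTop_mono' _ ?_
      ((tendsto_id.const_mul_atTop hC).atTop_add (tendsto_const_nhds (x := f 0)))
    filter_upwards [eventually_ge_atTop 0] with y hy
    have := slope hy
    simp only [id, sub_zero] at this ⊢
    linarith
  · refine tendsto_atBot_mono' _ ?_
      ((tendsto_id.const_mul_atBot hC).atBot_add (tendsto_const_nhds (x := f 0)))
    filter_upwards [eventually_le_atBot 0] with y hy
    have := slope hy
    simp only [id, zero_sub, mul_neg] at this ⊢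
    linarith

theorem exists_orderIso_hasDerivAt_comp {f : ℝ → ℝ} {M : ℝ} (hf : Continuous f)
    (hf_pos : ∀ x, 0 < f x) (hf_le : ∀ x, f x ≤ M) :
    ∃ v : ℝ ≃o ℝ, v 0 = 0 ∧ ∀ t, HasDerivAt v (f (v t)) t := by
  set h : ℝ → ℝ := fun x => ∫ u in (0 : ℝ)..x, (f u)⁻¹
  have hh : ∀ x, HasDerivAt h (f x)⁻¹ x := fun x =>
    ((hf.inv₀ fun u => (hf_pos u).ne').integral_hasStrictDerivAt 0 x).hasDerivAt
  have hM : 0 < M := (hf_pos 0).trans_le (hf_le 0)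
  have h_mono : StrictMono h :=
    strictMono_of_deriv_pos fun x => (hh x).deriv ▸ inv_pos.2 (hf_pos x)
  have h_surj : Function.Surjective h :=
    surjective_of_pos_le_deriv (fun x => (hh x).differentiableAt) (inv_pos.2 hM)
      fun x => (hh x).deriv ▸ inv_anti₀ (hf_pos x) (hf_le x)
  set e := h_mono.orderIsoOfSurjective h h_surj
  refine ⟨e.symm, e.symm_apply_eq.2 integral_same.symm, fun t => ?_⟩
  simpa using (hh (e.symm t)).of_local_left_inverse e.symm.continuous.continuousAt
    (inv_ne_zero (hf_pos _).ne') (Eventually.of_forall e.apply_symm_apply)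

theorem contDiff_one_of_hasDerivAt_comp {f v : ℝ → ℝ} (hf : Continuous f)
    (hv : ∀ t, HasDerivAt v (f (v t)) t) : ContDiff ℝ 1 v := by
  have hv_cont : Continuous v := continuous_iff_continuousAt.2 fun t => (hv t).continuousAt
  refine contDiff_one_iff_deriv.2 ⟨fun t => (hv t).differentiableAt, ?_⟩
  rw [funext fun t => (hv t).deriv]
  exact hf.comp hv_cont

theorem integral_le_integral_comp_of_le_mul_deriv {E g v v' : ℝ → ℝ} {a b : ℝ}
    (hab : a ≤ b) (hv : ∀ t ∈ Icc a b, HasDerivAt v (v' t) t)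
    (hv' : ContinuousOn v' (Icc a b)) (hg : Continuous g)
    (hE : IntervalIntegrable E MeasureTheory.volume a b)
    (hle : ∀ t ∈ Icc a b, E t ≤ g (v t) * v' t) :
    ∫ t in a..b, E t ≤ ∫ u in v a..v b, g u := by
  rw [← uIcc_of_le hab] at hv hv'
  have hv_cont : ContinuousOn v (uIcc a b) := fun t ht =>
    (hv t ht).continuousAt.continuousWithinAt
  calc ∫ t in a..b, E t ≤ ∫ t in a..b, (g ∘ v) t * v' t :=
        integral_mono_on hab hE
          (((hg.comp_continuousOn hv_cont).mul hv').intervalIntegrable) hle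
    _ = ∫ u in v a..v b, g u := integral_comp_mul_deriv hv hv' hg

theorem add_sq_sqrt_add_le {a δ : ℝ} (ha : 0 ≤ a) (hδ : 0 ≤ δ) :
    a + √(a + (δ / 2) ^ 2) ^ 2 ≤ (2 * √a + δ) * √(a + (δ / 2) ^ 2) := by
  set s := √(a + (δ / 2) ^ 2)
  have hs_sq : s ^ 2 = a + (δ / 2) ^ 2 := sq_sqrt (by positivity)
  have hs_le : s ≤ √a + δ / 2 := by
    refine sqrt_le_iff.2 ⟨by positivity, ?_⟩
    nlinarith [sq_sqrt ha, sqrt_nonneg a]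
  nlinarith [sqrt_nonneg a, sqrt_nonneg (a + (δ / 2) ^ 2)]

theorem exists_continuous_eqOn_Icc_range_subset {V : ℝ → ℝ} (hV : Continuous V)
    {a b : ℝ} (hab : a ≤ b) :
    ∃ W : ℝ → ℝ, Continuous W ∧ EqOn W V (Icc a b) ∧ range W ⊆ V '' Icc a b :=
  ⟨fun u => V (projIcc a b hab u), hV.comp (continuous_subtype_val.comp continuous_projIcc),
    fun u hu => by simp [projIcc_of_mem _ hu],
    range_subset_iff.2 fun u => mem_image_of_mem V (projIcc a b hab u).2⟩

/-- Almost optimal profiles for the Modica–Mortola transition energy: if `V : ℝ → ℝ` is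
continuous and nonnegative and `c_V = ∫_0^1 √(V t) dt`, then for every `δ > 0` there
exist `T > 0` and a `C¹` function `v` with `v 0 = 0`, `v T = 1`, `0 ≤ v ≤ 1` on `[0,T]`,
and `∫_0^T (V (v t) + (v' t)²) dt ≤ 2 c_V + δ`. -/
theorem modica_mortola_almost_optimal_profile
    (V : ℝ → ℝ) (hVcont : Continuous V) (hVnonneg : ∀ t : ℝ, 0 ≤ V t)
    (cV : ℝ) (hcV : cV = ∫ t in (0:ℝ)..1, Real.sqrt (V t)) :
    ∀ δ : ℝ, 0 < δ → ∃ T : ℝ, 0 < T ∧ ∃ v : ℝ → ℝ,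
      ContDiff ℝ 1 v ∧ v 0 = 0 ∧ v T = 1 ∧
      (∀ t ∈ Set.Icc (0:ℝ) T, 0 ≤ v t ∧ v t ≤ 1) ∧
      (∫ t in (0:ℝ)..T, (V (v t) + (deriv v t) ^ 2)) ≤ 2 * cV + δ := by
  intro δ hδ
  obtain ⟨W, hW, hWV, hW_range⟩ := exists_continuous_eqOn_Icc_range_subset hVcont zero_le_one
  obtain ⟨M, hM⟩ := ((isCompact_Icc (a := (0 : ℝ)) (b := 1)).image hVcont).bddAbove
  have hW_nonneg : ∀ u, 0 ≤ W u := fun u => by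
    obtain ⟨x, -, hx⟩ := hW_range (mem_range_self u)
    exact hx ▸ hVnonneg x
  have hWM : ∀ u, W u ≤ M := fun u => hM (hW_range (mem_range_self u))
  set f : ℝ → ℝ := fun u => √(W u + (δ / 2) ^ 2)
  have hf : Continuous f := by fun_prop
  obtain ⟨v, hv0, hv⟩ := exists_orderIso_hasDerivAt_comp hf (M := √(M + (δ / 2) ^ 2))
    (fun u => sqrt_pos.2 (by have := hW_nonneg u; positivity))
    (fun u => sqrt_le_sqrt (by linarith [hWM u]))
  have hcd := contDiff_one_of_hasDerivAt_comp hf hv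
  have hv1 : v (v.symm 1) = 1 := v.apply_symm_apply 1
  have hT : 0 < v.symm 1 := v.lt_symm_apply.2 (by rw [hv0]; exact one_pos)
  have hrange : ∀ t ∈ Icc 0 (v.symm 1), v t ∈ Icc (0 : ℝ) 1 := fun t ht =>
    ⟨hv0 ▸ v.monotone ht.1, hv1 ▸ v.monotone ht.2⟩
  have hE : Continuous fun t => V (v t) + deriv v t ^ 2 := by
    have := hcd.continuous_deriv le_rfl
    fun_prop
  refine ⟨v.symm 1, hT, v, hcd, hv0, hv1, hrange, ?_⟩
  calc (∫ t in (0 : ℝ)..v.symm 1, (V (v t) + deriv v t ^ 2))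
      ≤ ∫ u in (0 : ℝ)..1, (2 * √(V u) + δ) := by
        simpa [hv0, hv1] using integral_le_integral_comp_of_le_mul_deriv hT.le
          (fun t _ => hv t) (by fun_prop) (g := fun u => 2 * √(V u) + δ) (by fun_prop)
          (hE.intervalIntegrable _ _) fun t ht => by
            rw [(hv t).deriv, ← hWV (hrange t ht)]
            exact add_sq_sqrt_add_le (hW_nonneg _) hδ.le
    _ = 2 * cV + δ := by
        rw [integral_add ((hVcont.sqrt.const_mul 2).intervalIntegrable _ _)
          intervalIntegrable_const, integral_const_mul, hcV]
        simp
end
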